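/- arXiv:math/0702476 — 6 statements merged into one kernel-verified Lean document; each statement's English description precedes it below -/
import Mathlib

section
/- The Leibniz coboundary operator squares to zero: for a Leibniz algebra L and a representation M of L, the maps δ^n : CL^n(L;M) → CL^{n+1}(L;M) satisfy δ^{n+1} ∘ δ^n = 0, so (CL^*(L;M), δ) is a cochain complex. -/
set_option linter.unusedSectionVars false
set_option maxHeartbeats 1600000

/-- The Leibniz coboundary operator `δⁿ : CLⁿ(L;M) → CLⁿ⁺¹(L;M)`.
Here cochains are indexed with `Fin n` (0-indexed), so `x 0` is `x₁` etc.;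
`bll` is the bracket of `L`, `blm : L → M → M` and `bml : M → L → M` are the
left and right actions of `L` on the representation `M`. -/
def leibnizCoboundary {K L M : Type*} [Field K] [AddCommGroup L] [Module K L]
    [AddCommGroup M] [Module K M]
    (bll : L → L → L) (blm : L → M → M) (bml : M → L → M) (n : ℕ)
    (f : (Fin n → L) → M) : (Fin (n + 1) → L) → M := fun x =>
  blm (x 0) (f (Fin.tail x))
    + ∑ i : Fin (n + 1),
        (if 1 ≤ (i : ℕ) then
          ((-1 : ℤ) ^ ((i : ℕ) + 1)) • bml (f (fun k => x (i.succAbove k))) (x i)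
        else 0)
    + ∑ i : Fin (n + 1), ∑ j : Fin (n + 1),
        (if i < j then
          ((-1 : ℤ) ^ (j : ℕ)) •
            f (fun k => if j.succAbove k = i then bll (x i) (x j) else x (j.succAbove k))
        else 0)

namespace LeibnizAux
open Function Finset

lemma sa_lt {m : ℕ} {j : Fin (m+1)} {k : Fin m} (h : (k:ℕ) < (j:ℕ)) :
    j.succAbove k = k.castSucc :=
  Fin.succAbove_of_castSucc_lt _ _ (by simpa [Fin.lt_def] using h)

lemma sa_ge {m : ℕ} {j : Fin (m+1)} {k : Fin m} (h : (j:ℕ) ≤ (k:ℕ)) :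
    j.succAbove k = k.succ :=
  Fin.succAbove_of_le_castSucc _ _ (by simpa [Fin.le_def] using h)

lemma sa_val {m : ℕ} (j : Fin (m+1)) (k : Fin m) :
    ((j.succAbove k : Fin (m+1)) : ℕ) = if (k:ℕ) < (j:ℕ) then (k:ℕ) else (k:ℕ)+1 := by
  rcases lt_or_ge (k:ℕ) (j:ℕ) with h | h
  · rw [sa_lt h, if_pos h]; rfl
  · rw [sa_ge h, if_neg (by omega)]; rfl

lemma sa_comm {m : ℕ} {i j : Fin (m+1)} (hij : (i:ℕ) ≤ (j:ℕ)) (k : Fin m) :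
    (i.castSucc).succAbove (j.succAbove k) = (j.succ).succAbove (i.succAbove k) := by
  have hi : (i.castSucc : ℕ) = (i:ℕ) := rfl
  have hj : (j.succ : ℕ) = (j:ℕ)+1 := rfl
  apply Fin.ext
  rw [sa_val, sa_val, sa_val, sa_val, hi, hj]
  split_ifs <;> omega

/-- value of `succAbove` composition, useful for rewriting -/
lemma sa_comm_fun {m : ℕ} {i j : Fin (m+1)} (hij : (i:ℕ) ≤ (j:ℕ)) {α : Type*}
    (x : Fin (m+2) → α) :
    (fun k => x ((i.castSucc).succAbove (j.succAbove k)))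
      = fun k => x ((j.succ).succAbove (i.succAbove k)) := by
  funext k; rw [sa_comm hij]

/-- peel-off reindexing: a sum over `Fin (m+1)` supported on `val < t` with `t ≤ m`
is a sum over `Fin m`. -/
lemma sum_fin_lt_peel {M : Type*} [AddCommMonoid M] {m t : ℕ} (ht : t ≤ m)
    (g : Fin (m+1) → M) :
    (∑ a : Fin (m+1), if (a:ℕ) < t then g a else 0)
      = ∑ c : Fin m, if (c:ℕ) < t then g c.castSucc else 0 := by
  rw [Fin.sum_univ_castSucc]
  have : ¬ ((Fin.last m : ℕ) < t) := by simp [Fin.last]; omega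
  rw [if_neg this, add_zero]
  exact Finset.sum_congr rfl fun c _ => by norm_num

variable {K L M : Type*} [Field K] [AddCommGroup L] [Module K L]
  [AddCommGroup M] [Module K M]
variable (bll : L → L → L) (blm : L → M → M) (bml : M → L → M)

/-- The `j`-th coface piece of the Leibniz coboundary. -/
def Dm (n : ℕ) (j : Fin (n+1)) (f : (Fin n → L) → M) (x : Fin (n+1) → L) : M :=
  (if (j:ℕ) = 0 then blm (x 0) (f (Fin.tail x)) else 0)
  + (if 1 ≤ (j:ℕ) then -(bml (f (fun k => x (j.succAbove k))) (x j)) else 0)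
  + ∑ i : Fin (n+1), (if i < j then
      f (fun k => if j.succAbove k = i then bll (x i) (x j) else x (j.succAbove k)) else 0)

lemma Dm_zero (n : ℕ) (f : (Fin n → L) → M) (x : Fin (n+1) → L) :
    Dm bll blm bml n 0 f x = blm (x 0) (f (Fin.tail x)) := by
  simp [Dm, Fin.not_lt_zero]

lemma Dm_pos (n : ℕ) (j : Fin (n+1)) (hj : 0 < (j:ℕ)) (f : (Fin n → L) → M)
    (x : Fin (n+1) → L) :
    Dm bll blm bml n j f x
      = -(bml (f (fun k => x (j.succAbove k))) (x j))
        + ∑ b : Fin n, (if (b:ℕ) < (j:ℕ) then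
            f (Function.update (fun k => x (j.succAbove k)) b (bll (x b.castSucc) (x j)))
          else 0) := by
  have h0 : ¬ ((j:ℕ) = 0) := by omega
  rw [Dm, if_neg h0, if_pos (show 1 ≤ (j:ℕ) by omega), zero_add]
  congr 1
  rw [Fin.sum_univ_castSucc]
  have hlast : ¬ ((Fin.last n) < j) := by
    simp [Fin.lt_def, Fin.last]; omega
  rw [if_neg hlast, add_zero]
  refine Finset.sum_congr rfl fun b _ => ?_
  by_cases hb : (b:ℕ) < (j:ℕ)
  · rw [if_pos (by simpa [Fin.lt_def] using hb), if_pos hb]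
    congr 1
    funext k
    by_cases hk : k = b
    · subst hk
      rw [if_pos (sa_lt hb), Function.update_self]
    · rw [if_neg, Function.update_of_ne hk]
      rw [← sa_lt hb]
      exact fun h => hk (Fin.succAbove_right_injective h)
  · rw [if_neg (by simpa [Fin.lt_def] using hb), if_neg hb]

/-- `Dm` is additive in `f` over finite sums. -/
lemma Dm_sum
    (h6 : ∀ (x : L) (m m' : M), blm x (m + m') = blm x m + blm x m')
    (h9 : ∀ (m m' : M) (x : L), bml (m + m') x = bml m x + bml m' x)
    {ι : Type*} (s : Finset ι) (n : ℕ) (j : Fin (n+1))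
    (g : ι → (Fin n → L) → M) (x : Fin (n+1) → L) :
    Dm bll blm bml n j (fun y => ∑ k ∈ s, g k y) x
      = ∑ k ∈ s, Dm bll blm bml n j (g k) x := by
  have hblm : ∀ z : L, ∀ (F : ι → M), blm z (∑ k ∈ s, F k) = ∑ k ∈ s, blm z (F k) :=
    fun z F => map_sum (AddMonoidHom.mk' (blm z) (h6 z)) F s
  have hbml : ∀ z : L, ∀ (F : ι → M), bml (∑ k ∈ s, F k) z = ∑ k ∈ s, bml (F k) z :=
    fun z F => map_sum (AddMonoidHom.mk' (fun m => bml m z) (fun a b => h9 a b z)) F s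
  have hswap : ∀ (c : Prop) [Decidable c] (F : ι → M),
      (if c then ∑ k ∈ s, F k else 0) = ∑ k ∈ s, (if c then F k else 0) := by
    intro c inst F; split_ifs <;> simp
  simp only [Dm, hblm, hbml, ← Finset.sum_neg_distrib, hswap]
  rw [Finset.sum_comm, ← Finset.sum_add_distrib, ← Finset.sum_add_distrib]

/-- `Dm` commutes with `ℤ`-scalars in `f`. -/
lemma Dm_zsmul
    (h6 : ∀ (x : L) (m m' : M), blm x (m + m') = blm x m + blm x m')
    (h9 : ∀ (m m' : M) (x : L), bml (m + m') x = bml m x + bml m' x)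
    (c : ℤ) (n : ℕ) (j : Fin (n+1)) (g : (Fin n → L) → M) (x : Fin (n+1) → L) :
    Dm bll blm bml n j (fun y => c • g y) x = c • Dm bll blm bml n j g x := by
  have hblm : ∀ z : L, ∀ (m : M), blm z (c • m) = c • blm z m :=
    fun z m => map_zsmul (AddMonoidHom.mk' (blm z) (h6 z)) c m
  have hbml : ∀ z : L, ∀ (m : M), bml (c • m) z = c • bml m z :=
    fun z m => map_zsmul (AddMonoidHom.mk' (fun m => bml m z) (fun a b => h9 a b z)) c m
  have hswap : ∀ (p : Prop) [Decidable p] (m : M),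
      (if p then c • m else 0) = c • (if p then m else 0) := by
    intro p inst m; split_ifs <;> simp
  simp only [Dm, hblm, hbml, ← smul_neg, hswap, ← Finset.smul_sum, ← smul_add]

lemma delta_eq (n : ℕ) (f : (Fin n → L) → M) (x : Fin (n+1) → L) :
    leibnizCoboundary (K := K) bll blm bml n f x
      = ∑ j : Fin (n+1), ((-1 : ℤ) ^ (j:ℕ)) • Dm bll blm bml n j f x := by
  simp only [leibnizCoboundary, Dm, smul_add]
  rw [Finset.sum_add_distrib, Finset.sum_add_distrib]
  congr 1
  · congr 1
    · -- first piece
      rw [Fintype.sum_eq_single (0 : Fin (n+1))]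
      · simp
      · intro j hj
        rw [if_neg (show ¬ ((j:ℕ) = 0) by rw [Fin.val_eq_zero_iff]; exact hj), smul_zero]
    · -- second piece
      refine Finset.sum_congr rfl fun j _ => ?_
      by_cases hj : 1 ≤ (j:ℕ)
      · rw [if_pos hj, if_pos hj, pow_succ, mul_smul]
        simp
      · rw [if_neg hj, if_neg hj, smul_zero]
  · -- third piece
    rw [Finset.sum_comm]
    refine Finset.sum_congr rfl fun j _ => ?_
    rw [Finset.smul_sum]
    refine Finset.sum_congr rfl fun i _ => ?_
    by_cases hij : i < j
    · rw [if_pos hij, if_pos hij]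
    · rw [if_neg hij, if_neg hij, smul_zero]

/-- abstract pairing lemma -/
lemma pairing (n : ℕ) (T : Fin (n+2) → Fin (n+1) → M)
    (key : ∀ (i j : Fin (n+1)), (i:ℕ) ≤ (j:ℕ) → T i.castSucc j = T j.succ i) :
    ∑ i : Fin (n+2), ∑ j : Fin (n+1), ((-1 : ℤ) ^ ((i:ℕ) + (j:ℕ))) • T i j = 0 := by
  set F : Fin (n+2) × Fin (n+1) → M := fun p => ((-1 : ℤ) ^ ((p.1:ℕ) + (p.2:ℕ))) • T p.1 p.2 with hF
  have hprod : ∑ p : Fin (n+2) × Fin (n+1), F p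
      = ∑ i : Fin (n+2), ∑ j : Fin (n+1), ((-1 : ℤ) ^ ((i:ℕ) + (j:ℕ))) • T i j := by
    rw [Fintype.sum_prod_type]
  rw [← hprod]
  rw [← Finset.sum_filter_add_sum_filter_not univ (fun p => (p.1:ℕ) ≤ (p.2:ℕ))]
  have main : ∑ p ∈ univ.filter (fun p : Fin (n+2) × Fin (n+1) => (p.1:ℕ) ≤ (p.2:ℕ)), F p
      = ∑ p ∈ univ.filter (fun p : Fin (n+2) × Fin (n+1) => ¬ (p.1:ℕ) ≤ (p.2:ℕ)), (fun q => -F q) p := by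
    refine Finset.sum_nbij' (i := fun p => (p.2.succ, ⟨min (p.1:ℕ) n, by omega⟩))
      (j := fun q => ((q.2 : Fin (n+1)).castSucc, ⟨min ((q.1:ℕ)-1) n, by omega⟩)) ?_ ?_ ?_ ?_ ?_
    · intro p hp
      simp only [Finset.mem_filter, Finset.mem_univ, true_and] at hp ⊢
      simp [Fin.val_succ]; omega
    · intro q hq
      simp only [Finset.mem_filter, Finset.mem_univ, true_and] at hq ⊢
      simp [Fin.coe_castSucc]; omega
    · intro p hp
      simp only [Finset.mem_filter, Finset.mem_univ, true_and] at hp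
      have h2 : (p.2:ℕ) ≤ n := by omega
      ext
      · simp [Fin.coe_castSucc, Fin.val_succ]; omega
      · simp; omega
    · intro q hq
      simp only [Finset.mem_filter, Finset.mem_univ, true_and] at hq
      have h1 : 1 ≤ (q.1:ℕ) := by omega
      have h1' : (q.1:ℕ) ≤ n+1 := by omega
      ext
      · simp [Fin.val_succ]; omega
      · simp [Fin.coe_castSucc]; omega
    · intro p hp
      simp only [Finset.mem_filter, Finset.mem_univ, true_and] at hp
      have h1 : (p.1:ℕ) ≤ n := by omega
      have hmin : min (p.1:ℕ) n = (p.1:ℕ) := by omega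
      have hT : T p.1 p.2 = T p.2.succ ⟨min (p.1:ℕ) n, by omega⟩ := by
        have hkey := key ⟨min (p.1:ℕ) n, by omega⟩ p.2 (by simp; omega)
        have hc : (⟨min (p.1:ℕ) n, by omega⟩ : Fin (n+1)).castSucc = p.1 := by
          ext; simp [Fin.coe_castSucc]; omega
        rw [hc] at hkey
        exact hkey
      simp only [hF, hT]
      have hexp : ((p.2.succ : Fin (n+2)) : ℕ) + ((⟨min (p.1:ℕ) n, by omega⟩ : Fin (n+1)) : ℕ)
          = ((p.1:ℕ) + (p.2:ℕ)) + 1 := by simp [Fin.val_succ]; omega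
      rw [hexp, pow_succ, mul_smul]
      simp
  rw [main]
  rw [Finset.sum_neg_distrib]
  exact neg_add_cancel _

/-- The key semi-cosimplicial commutation identity. -/
lemma comm
    (hL : ∀ x y z : L, bll x (bll y z) = bll (bll x y) z - bll (bll x z) y)
    (hM1 : ∀ (x y : L) (m : M), blm x (blm y m) = blm (bll x y) m - bml (blm x m) y)
    (hM2 : ∀ (x y : L) (m : M), blm x (bml m y) = bml (blm x m) y - blm (bll x y) m)
    (hM3 : ∀ (m : M) (x y : L), bml m (bll x y) = bml (bml m x) y - bml (bml m y) x)
    (h6 : ∀ (x : L) (m m' : M), blm x (m + m') = blm x m + blm x m')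
    (h9 : ∀ (m m' : M) (x : L), bml (m + m') x = bml m x + bml m' x)
    (n : ℕ) (f : (Fin n → L) → M)
    (hfadd : ∀ (x : Fin n → L) (i : Fin n) (a b : L),
      f (Function.update x i (a + b)) = f (Function.update x i a) + f (Function.update x i b))
    (hfzero : ∀ (x : Fin n → L) (i : Fin n), f (Function.update x i 0) = 0)
    (i j : Fin (n+1)) (hij : (i:ℕ) ≤ (j:ℕ)) (x : Fin (n+2) → L) :
    Dm bll blm bml (n+1) i.castSucc (Dm bll blm bml n j f) x
      = Dm bll blm bml (n+1) j.succ (Dm bll blm bml n i f) x := by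
  -- auxiliary additivity facts
  have blmh : ∀ z : L, ∀ a b : M, blm z (a+b) = blm z a + blm z b := h6
  have blmn : ∀ z : L, ∀ a : M, blm z (-a) = -blm z a :=
    fun z a => map_neg (AddMonoidHom.mk' (blm z) (h6 z)) a
  have blm0 : ∀ z : L, blm z (0:M) = 0 :=
    fun z => map_zero (AddMonoidHom.mk' (blm z) (h6 z))
  have blmS : ∀ z : L, ∀ {ι : Type} (s : Finset ι) (F : ι → M),
      blm z (∑ k ∈ s, F k) = ∑ k ∈ s, blm z (F k) := by
    intro z ι s F; exact map_sum (AddMonoidHom.mk' (blm z) (h6 z)) F s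
  have blmI : ∀ z : L, ∀ (c : Prop) [Decidable c] (a : M),
      blm z (if c then a else 0) = if c then blm z a else 0 := by
    intro z c inst a; by_cases h : c <;> simp [h, blm0]
  rcases Nat.eq_zero_or_pos (i:ℕ) with hi0 | hi0
  · have hi : i = 0 := Fin.ext hi0
    subst hi
    rw [Fin.castSucc_zero]
    rcases Nat.eq_zero_or_pos (j:ℕ) with hj0 | hj0
    · -- Case A : i = j = 0
      have hj : j = 0 := Fin.ext hj0
      subst hj
      rw [Dm_zero, Dm_zero, Dm_pos bll blm bml (n+1) (0:Fin (n+1)).succ (by simp)]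
      rw [Fin.sum_univ_succ]
      have hz : ∀ c : Fin n, ¬ ((c.succ : ℕ) < ((0:Fin (n+1)).succ : ℕ)) := by
        intro c; simp
      simp only [if_neg (hz _), Finset.sum_const_zero, add_zero]
      rw [if_pos (by simp)]
      rw [Dm_zero, Dm_zero]
      -- normalize the tuples
      have e1 : x ((0:Fin (n+1)).succ.succAbove 0) = x 0 := by
        simp
      have e2 : Fin.tail (fun k => x ((0:Fin (n+1)).succ.succAbove k))
          = Fin.tail (Fin.tail x) := by
        funext k
        simp [Fin.tail, Fin.succ_succAbove_succ]
      have e3 : Function.update (fun k => x ((0:Fin (n+1)).succ.succAbove k)) 0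
            (bll (x (0:Fin (n+1)).castSucc) (x (0:Fin (n+1)).succ)) 0
          = bll (x 0) (x 1) := by
        simp [Fin.succ_zero_eq_one]
      have e4 : Fin.tail (Function.update (fun k => x ((0:Fin (n+1)).succ.succAbove k)) 0
            (bll (x (0:Fin (n+1)).castSucc) (x (0:Fin (n+1)).succ)))
          = Fin.tail (Fin.tail x) := by
        rw [Fin.tail_update_zero, e2]
      rw [e1, e2, e3, e4]
      have e5 : Fin.tail x 0 = x 1 := rfl
      have e6 : x (0:Fin (n+1)).succ = x 1 := by norm_num
      rw [e5, e6, hM1 (x 0) (x 1) (f (Fin.tail (Fin.tail x)))]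
      abel
    · -- Case B : i = 0 < j
      have hJp : 0 < ((j.succ : Fin (n+2)) : ℕ) := by simp
      rw [Dm_zero, Dm_pos bll blm bml n j hj0 f (Fin.tail x),
          Dm_pos bll blm bml (n+1) j.succ hJp (Dm bll blm bml n 0 f) x]
      have eT : (fun k => Fin.tail x (j.succAbove k)) = fun k => x ((j.succAbove k).succ) := by
        funext k; simp [Fin.tail]
      have eTj : Fin.tail x j = x j.succ := rfl
      rw [blmh, blmn, blmS, eT, eTj]
      simp only [blmI, Dm_zero]
      rw [Fin.sum_univ_succ]
      have eY0 : x (j.succ.succAbove (0 : Fin (n+1))) = x 0 := by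
        rw [sa_lt (by simp : (((0:Fin (n+1)):ℕ)) < ((j.succ : Fin (n+2)):ℕ))]
        simp
      have eTail2 : Fin.tail (fun k => x (j.succ.succAbove k))
          = fun k => x ((j.succAbove k).succ) := by
        funext k; simp [Fin.tail, Fin.succ_succAbove_succ]
      rw [if_pos (show (((0:Fin (n+1)):ℕ)) < ((j.succ : Fin (n+2)):ℕ) by simp)]
      rw [eY0, eTail2]
      simp only [Function.update_self, Fin.tail_update_zero, Fin.castSucc_zero, eTail2]
      rw [hM2 (x 0) (x j.succ) (f (fun k => x ((j.succAbove k).succ)))]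
      have hS : (∑ b : Fin n, if (b:ℕ) < (j:ℕ) then
            blm (x 0) (f (Function.update (fun k => x ((j.succAbove k).succ)) b
              (bll (Fin.tail x b.castSucc) (x j.succ)))) else 0)
          = ∑ b : Fin n, if ((b.succ : Fin (n+1)):ℕ) < ((j.succ : Fin (n+2)):ℕ) then
              blm (Function.update (fun k => x (j.succ.succAbove k)) b.succ
                  (bll (x b.succ.castSucc) (x j.succ)) 0)
                (f (Fin.tail (Function.update (fun k => x (j.succ.succAbove k)) b.succ
                  (bll (x b.succ.castSucc) (x j.succ))))) else 0 := by
        refine Finset.sum_congr rfl fun b _ => ?_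
        by_cases hb : (b:ℕ) < (j:ℕ)
        · rw [if_pos hb, if_pos (show ((b.succ : Fin (n+1)):ℕ) < ((j.succ : Fin (n+2)):ℕ) by
            simp [Fin.val_succ]; omega)]
          rw [Function.update_of_ne (Fin.succ_ne_zero b).symm]
          rw [Fin.tail_update_succ, eTail2]
          have e5 : Fin.tail x b.castSucc = x b.succ.castSucc := by
            simp [Fin.tail, Fin.succ_castSucc, -Fin.castSucc_succ]
          rw [e5, eY0]
        · rw [if_neg hb, if_neg (show ¬ ((b.succ : Fin (n+1)):ℕ) < ((j.succ : Fin (n+2)):ℕ) by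
            simp [Fin.val_succ]; omega)]
      rw [hS]
      abel
  · -- Case C : 0 < i ≤ j
    have hjp : 0 < (j:ℕ) := lt_of_lt_of_le hi0 hij
    have hin : (i:ℕ) ≤ n := Fin.is_le i
    have hjn : (j:ℕ) ≤ n := Fin.is_le j
    have bmlh : ∀ (a b : M) (z : L), bml (a+b) z = bml a z + bml b z := fun a b z => h9 a b z
    have bmln : ∀ (a : M) (z : L), bml (-a) z = -(bml a z) :=
      fun a z => map_neg (AddMonoidHom.mk' (fun m => bml m z) (fun a b => h9 a b z)) a
    have bmlS : ∀ (z : L), ∀ {ι : Type} (s : Finset ι) (F : ι → M),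
        bml (∑ k ∈ s, F k) z = ∑ k ∈ s, bml (F k) z := by
      intro z ι s F; exact map_sum (AddMonoidHom.mk' (fun m => bml m z) (fun a b => h9 a b z)) F s
    have bml0 : ∀ (z : L), bml (0:M) z = 0 :=
      fun z => map_zero (AddMonoidHom.mk' (fun m => bml m z) (fun a b => h9 a b z))
    have bmlI : ∀ (P : Prop) [Decidable P] (a : M) (z : L),
        bml (if P then a else 0) z = if P then bml a z else 0 := by
      intro P inst a z; by_cases h : P <;> simp [h, bml0]
    have ifneg : ∀ (P : Prop) [Decidable P] (m : M),
        (if P then -m else 0) = -(if P then m else 0) := by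
      intro P inst m; by_cases h : P <;> simp [h]
    have ifadd : ∀ (P : Prop) [Decidable P] (p q r : M),
        (if P then p + (q + r) else 0)
          = (if P then p else 0) + ((if P then q else 0) + (if P then r else 0)) := by
      intro P inst p q r; by_cases h : P <;> simp [h]
    have eC : (fun k => x (i.castSucc.succAbove (j.succAbove k))) = (fun k => x (j.succ.succAbove (i.succAbove k))) :=
      funext fun k => congrArg x (sa_comm hij k)
    have eXj : x (i.castSucc.succAbove j) = x j.succ :=
      congrArg x (sa_ge (by simpa using hij))
    have eYi : x (j.succ.succAbove i) = x i.castSucc :=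
      congrArg x (sa_lt (by simp; omega))
    have eXcs : ∀ b : Fin n, x (i.castSucc.succAbove b.castSucc) = x ((i.succAbove b).castSucc) :=
      fun b => congrArg x Fin.castSucc_succAbove_castSucc
    rw [Dm_pos bll blm bml (n+1) i.castSucc (by simpa using hi0) (Dm bll blm bml n j f) x,
        Dm_pos bll blm bml (n+1) j.succ (by simp) (Dm bll blm bml n i f) x]
    simp only [Dm_pos bll blm bml n j hjp, Dm_pos bll blm bml n i hi0]
    simp only [Fin.coe_castSucc, Fin.val_succ]
    simp only [eC, eXj, eYi, eXcs]
    simp only [bmlh, bmln, bmlS, bmlI, neg_add, neg_neg]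
    rw [sum_fin_lt_peel hin]
    have hLpt : ∀ c : Fin n,
        (if (c:ℕ) < (i:ℕ) then
          -bml (f fun k => Function.update (fun k' => x (i.castSucc.succAbove k')) c.castSucc (bll (x c.castSucc.castSucc) (x i.castSucc)) (j.succAbove k)) (Function.update (fun k' => x (i.castSucc.succAbove k')) c.castSucc (bll (x c.castSucc.castSucc) (x i.castSucc)) j)
            + ∑ b : Fin n, (if (b:ℕ) < (j:ℕ) then
                f (Function.update (fun k => Function.update (fun k' => x (i.castSucc.succAbove k')) c.castSucc (bll (x c.castSucc.castSucc) (x i.castSucc)) (j.succAbove k)) b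
                    (bll (Function.update (fun k' => x (i.castSucc.succAbove k')) c.castSucc (bll (x c.castSucc.castSucc) (x i.castSucc)) b.castSucc) (Function.update (fun k' => x (i.castSucc.succAbove k')) c.castSucc (bll (x c.castSucc.castSucc) (x i.castSucc)) j)))
              else 0)
        else 0)
        = (if (c:ℕ) < (i:ℕ) then
            -bml (f (Function.update (fun k => x (j.succ.succAbove (i.succAbove k))) c (bll (x c.castSucc.castSucc) (x i.castSucc)))) (x j.succ)
              + (f (Function.update (fun k => x (j.succ.succAbove (i.succAbove k))) c (bll (bll (x c.castSucc.castSucc) (x i.castSucc)) (x j.succ)))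
                + ∑ b ∈ Finset.univ.erase c, (if (b:ℕ) < (j:ℕ) then
                    f (Function.update (Function.update (fun k => x (j.succ.succAbove (i.succAbove k))) c (bll (x c.castSucc.castSucc) (x i.castSucc))) b (bll (x ((i.succAbove b).castSucc)) (x j.succ)))
                  else 0))
          else 0) := by
      intro c
      by_cases hc : (c:ℕ) < (i:ℕ)
      · rw [if_pos hc, if_pos hc]
        have hcj : (c:ℕ) < (j:ℕ) := by omega
        have hvj : Function.update (fun k' => x (i.castSucc.succAbove k')) c.castSucc (bll (x c.castSucc.castSucc) (x i.castSucc)) j = x j.succ := by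
          rw [Function.update_of_ne (show j ≠ c.castSucc from
            Fin.ne_of_val_ne (by simp; omega))]
          exact eXj
        have htup : (fun k => Function.update (fun k' => x (i.castSucc.succAbove k')) c.castSucc (bll (x c.castSucc.castSucc) (x i.castSucc)) (j.succAbove k))
            = Function.update (fun k => x (j.succ.succAbove (i.succAbove k))) c (bll (x c.castSucc.castSucc) (x i.castSucc)) := by
          funext k
          rcases eq_or_ne k c with rfl | hk
          · rw [sa_lt hcj, Function.update_self, Function.update_self]
          · have h1 : j.succAbove k ≠ c.castSucc :=
              fun h => hk (Fin.succAbove_right_injective (h.trans (sa_lt hcj).symm))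
            rw [Function.update_of_ne h1, Function.update_of_ne hk]
            exact congrArg x (sa_comm hij k)
        simp only [htup, hvj]
        congr 1
        rw [← Finset.add_sum_erase _ _ (Finset.mem_univ c)]
        congr 1
        · rw [if_pos hcj, Function.update_self, Function.update_idem]
        · refine Finset.sum_congr rfl fun b hb => ?_
          have hbc : b ≠ c := Finset.ne_of_mem_erase hb
          by_cases hbj : (b:ℕ) < (j:ℕ)
          · rw [if_pos hbj, if_pos hbj,
              Function.update_of_ne (show b.castSucc ≠ c.castSucc by
                simpa [Fin.castSucc_inj] using hbc)]
            simp only [Fin.castSucc_succAbove_castSucc]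
          · rw [if_neg hbj, if_neg hbj]
      · rw [if_neg hc, if_neg hc]
    simp only [hLpt]
    rw [Fin.sum_univ_succAbove _ i]
    have hHi : (if (i:ℕ) < (j:ℕ)+1 then
        -bml (f fun k => Function.update (fun k' => x (j.succ.succAbove k')) i (bll (x i.castSucc) (x j.succ)) (i.succAbove k)) (Function.update (fun k' => x (j.succ.succAbove k')) i (bll (x i.castSucc) (x j.succ)) i)
          + ∑ c : Fin n, (if (c:ℕ) < (i:ℕ) then
              f (Function.update (fun k => Function.update (fun k' => x (j.succ.succAbove k')) i (bll (x i.castSucc) (x j.succ)) (i.succAbove k)) c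
                  (bll (Function.update (fun k' => x (j.succ.succAbove k')) i (bll (x i.castSucc) (x j.succ)) c.castSucc) (Function.update (fun k' => x (j.succ.succAbove k')) i (bll (x i.castSucc) (x j.succ)) i)))
            else 0)
      else 0)
      = -bml (f (fun k => x (j.succ.succAbove (i.succAbove k)))) (bll (x i.castSucc) (x j.succ))
        + ∑ c : Fin n, (if (c:ℕ) < (i:ℕ) then
            f (Function.update (fun k => x (j.succ.succAbove (i.succAbove k))) c (bll (x c.castSucc.castSucc) (bll (x i.castSucc) (x j.succ)))) else 0) := by
      rw [if_pos (by omega : (i:ℕ) < (j:ℕ)+1)]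
      have htup0 : (fun k => Function.update (fun k' => x (j.succ.succAbove k')) i (bll (x i.castSucc) (x j.succ)) (i.succAbove k)) = (fun k => x (j.succ.succAbove (i.succAbove k))) := by
        funext k; rw [Function.update_of_ne (Fin.succAbove_ne i k)]
      simp only [htup0, Function.update_self]
      congr 1
      refine Finset.sum_congr rfl fun c _ => ?_
      by_cases hci : (c:ℕ) < (i:ℕ)
      · rw [if_pos hci, if_pos hci,
          Function.update_of_ne (show c.castSucc ≠ i from Fin.ne_of_val_ne (by simp; omega))]
        have hyc : x (j.succ.succAbove c.castSucc) = x c.castSucc.castSucc :=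
          congrArg x (sa_lt (by simp; omega))
        simp only [hyc]
      · rw [if_neg hci, if_neg hci]
    rw [hHi]
    have hRpt : ∀ b : Fin n,
        (if ((i.succAbove b : Fin (n+1)):ℕ) < (j:ℕ)+1 then
          -bml (f fun k => Function.update (fun k' => x (j.succ.succAbove k')) (i.succAbove b) (bll (x (i.succAbove b).castSucc) (x j.succ)) (i.succAbove k)) (Function.update (fun k' => x (j.succ.succAbove k')) (i.succAbove b) (bll (x (i.succAbove b).castSucc) (x j.succ)) i)
            + ∑ c : Fin n, (if (c:ℕ) < (i:ℕ) then
                f (Function.update (fun k => Function.update (fun k' => x (j.succ.succAbove k')) (i.succAbove b) (bll (x (i.succAbove b).castSucc) (x j.succ)) (i.succAbove k)) c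
                    (bll (Function.update (fun k' => x (j.succ.succAbove k')) (i.succAbove b) (bll (x (i.succAbove b).castSucc) (x j.succ)) c.castSucc) (Function.update (fun k' => x (j.succ.succAbove k')) (i.succAbove b) (bll (x (i.succAbove b).castSucc) (x j.succ)) i)))
              else 0)
        else 0)
        = (if (b:ℕ) < (j:ℕ) then
            -bml (f (Function.update (fun k => x (j.succ.succAbove (i.succAbove k))) b (bll (x ((i.succAbove b).castSucc)) (x j.succ)))) (x i.castSucc)
              + ((if (b:ℕ) < (i:ℕ) then
                    f (Function.update (fun k => x (j.succ.succAbove (i.succAbove k))) b (bll (bll (x b.castSucc.castSucc) (x j.succ)) (x i.castSucc))) else 0)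
                + ∑ c ∈ Finset.univ.erase b, (if (c:ℕ) < (i:ℕ) then
                    f (Function.update (Function.update (fun k => x (j.succ.succAbove (i.succAbove k))) b (bll (x ((i.succAbove b).castSucc)) (x j.succ))) c
                        (bll (x c.castSucc.castSucc) (x i.castSucc)))
                  else 0))
          else 0) := by
      intro b
      have hcond : (((i.succAbove b : Fin (n+1)):ℕ) < (j:ℕ)+1) ↔ ((b:ℕ) < (j:ℕ)) := by
        rw [sa_val]; split_ifs <;> omega
      by_cases hbj : (b:ℕ) < (j:ℕ)
      · rw [if_pos (hcond.mpr hbj), if_pos hbj]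
        have hvi : Function.update (fun k' => x (j.succ.succAbove k')) (i.succAbove b) (bll (x (i.succAbove b).castSucc) (x j.succ)) i = x i.castSucc := by
          rw [Function.update_of_ne (Fin.succAbove_ne i b).symm]
          exact eYi
        have htupR : (fun k => Function.update (fun k' => x (j.succ.succAbove k')) (i.succAbove b) (bll (x (i.succAbove b).castSucc) (x j.succ)) (i.succAbove k))
            = Function.update (fun k => x (j.succ.succAbove (i.succAbove k))) b (bll (x ((i.succAbove b).castSucc)) (x j.succ)) := by
          funext k
          rcases eq_or_ne k b with rfl | hk
          · rw [Function.update_self, Function.update_self]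
          · rw [Function.update_of_ne (fun h => hk (Fin.succAbove_right_injective h)),
              Function.update_of_ne hk]
        simp only [htupR, hvi]
        congr 1
        rw [← Finset.add_sum_erase _ _ (Finset.mem_univ b)]
        congr 1
        · by_cases hbi : (b:ℕ) < (i:ℕ)
          · rw [if_pos hbi, if_pos hbi, show i.succAbove b = b.castSucc from sa_lt hbi,
              Function.update_self, Function.update_idem]
          · rw [if_neg hbi, if_neg hbi]
        · refine Finset.sum_congr rfl fun c hcb => ?_
          have hcbne : c ≠ b := Finset.ne_of_mem_erase hcb
          by_cases hci : (c:ℕ) < (i:ℕ)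
          · have hvne : (c:ℕ) ≠ (b:ℕ) := fun h => hcbne (Fin.ext h)
            rw [if_pos hci, if_pos hci,
              Function.update_of_ne (show c.castSucc ≠ i.succAbove b from
                Fin.ne_of_val_ne (by rw [sa_val]; simp only [Fin.coe_castSucc]; split_ifs <;> omega))]
            have hyc : x (j.succ.succAbove c.castSucc) = x c.castSucc.castSucc :=
              congrArg x (sa_lt (by simp; omega))
            simp only [hyc]
          · rw [if_neg hci, if_neg hci]
      · rw [if_neg (fun h => hbj (hcond.mp h)), if_neg hbj]
    simp only [hRpt]
    have hS3pt : ∀ b : Fin n,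
        (if (b:ℕ) < (i:ℕ) then
          bml (f (Function.update (fun k => x (j.succ.succAbove (i.succAbove k))) b (bll (x (j.succ.succAbove b.castSucc)) (x i.castSucc)))) (x j.succ)
        else 0)
        = (if (b:ℕ) < (i:ℕ) then
            bml (f (Function.update (fun k => x (j.succ.succAbove (i.succAbove k))) b (bll (x b.castSucc.castSucc) (x i.castSucc)))) (x j.succ) else 0) := by
      intro b
      by_cases hbi : (b:ℕ) < (i:ℕ)
      · rw [if_pos hbi, if_pos hbi]
        have hyb : x (j.succ.succAbove b.castSucc) = x b.castSucc.castSucc :=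
          congrArg x (sa_lt (by simp; omega))
        rw [hyb]
      · rw [if_neg hbi, if_neg hbi]
    simp only [hS3pt]
    have hcoll : ∀ b : Fin n,
        (if (b:ℕ) < (j:ℕ) then
          (if (b:ℕ) < (i:ℕ) then f (Function.update (fun k => x (j.succ.succAbove (i.succAbove k))) b (bll (bll (x b.castSucc.castSucc) (x j.succ)) (x i.castSucc))) else 0)
        else 0)
        = (if (b:ℕ) < (i:ℕ) then f (Function.update (fun k => x (j.succ.succAbove (i.succAbove k))) b (bll (bll (x b.castSucc.castSucc) (x j.succ)) (x i.castSucc))) else 0) := by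
      intro b
      by_cases h1 : (b:ℕ) < (j:ℕ)
      · rw [if_pos h1]
      · rw [if_neg h1, if_neg (by omega : ¬ ((b:ℕ) < (i:ℕ)))]
    simp only [ifadd, hcoll, ifneg, Finset.sum_add_distrib, Finset.sum_neg_distrib]
    have erw1 : ∀ (c : Fin n) (F : Fin n → M),
        (∑ b ∈ Finset.univ.erase c, F b) = ∑ b : Fin n, if b ≠ c then F b else 0 := by
      intro c F; rw [← Finset.filter_ne', Finset.sum_filter]
    have itesum : ∀ (P : Prop) [Decidable P] (F : Fin n → M),
        (if P then ∑ c : Fin n, F c else 0) = ∑ c : Fin n, if P then F c else 0 := by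
      intro P inst F; by_cases h : P <;> simp [h]
    have hS4eq : (∑ b : Fin n, if (b:ℕ) < (j:ℕ) then
          (∑ c ∈ Finset.univ.erase b, (if (c:ℕ) < (i:ℕ) then
            f (Function.update (Function.update (fun k => x (j.succ.succAbove (i.succAbove k))) b (bll (x ((i.succAbove b).castSucc)) (x j.succ))) c
                (bll (x c.castSucc.castSucc) (x i.castSucc))) else 0)) else 0)
        = ∑ c : Fin n, if (c:ℕ) < (i:ℕ) then
            (∑ b ∈ Finset.univ.erase c, (if (b:ℕ) < (j:ℕ) then
              f (Function.update (Function.update (fun k => x (j.succ.succAbove (i.succAbove k))) c (bll (x c.castSucc.castSucc) (x i.castSucc))) b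
                  (bll (x ((i.succAbove b).castSucc)) (x j.succ))) else 0)) else 0 := by
      simp only [erw1, itesum]
      rw [Finset.sum_comm]
      refine Finset.sum_congr rfl fun c _ => Finset.sum_congr rfl fun b _ => ?_
      by_cases h3 : c = b
      · subst h3; simp
      · have h3' : b ≠ c := fun h => h3 h.symm
        by_cases h1 : (c:ℕ) < (i:ℕ) <;> by_cases h2 : (b:ℕ) < (j:ℕ)
        · simp only [if_pos h1, if_pos h2, if_pos (show c ≠ b from h3), if_pos h3']
          exact congrArg f (Function.update_comm h3' _ _ _)
        · simp [h1, h2]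
        · simp [h1, h2]
        · simp [h1, h2]
    rw [hS4eq, hM3 (f (fun k => x (j.succ.succAbove (i.succAbove k)))) (x i.castSucc) (x j.succ)]
    have hS5sum : (∑ c : Fin n, if (c:ℕ) < (i:ℕ) then
          f (Function.update (fun k => x (j.succ.succAbove (i.succAbove k))) c (bll (x c.castSucc.castSucc) (bll (x i.castSucc) (x j.succ)))) else 0)
        + (∑ c : Fin n, if (c:ℕ) < (i:ℕ) then
            f (Function.update (fun k => x (j.succ.succAbove (i.succAbove k))) c (bll (bll (x c.castSucc.castSucc) (x j.succ)) (x i.castSucc))) else 0)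
        = ∑ c : Fin n, if (c:ℕ) < (i:ℕ) then
            f (Function.update (fun k => x (j.succ.succAbove (i.succAbove k))) c (bll (bll (x c.castSucc.castSucc) (x i.castSucc)) (x j.succ))) else 0 := by
      rw [← Finset.sum_add_distrib]
      refine Finset.sum_congr rfl fun c _ => ?_
      by_cases hci : (c:ℕ) < (i:ℕ)
      · rw [if_pos hci, if_pos hci, if_pos hci, ← hfadd]
        have hbr : bll (x c.castSucc.castSucc) (bll (x i.castSucc) (x j.succ)) + bll (bll (x c.castSucc.castSucc) (x j.succ)) (x i.castSucc)
            = bll (bll (x c.castSucc.castSucc) (x i.castSucc)) (x j.succ) := by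
          rw [hL (x c.castSucc.castSucc) (x i.castSucc) (x j.succ)]; abel
        rw [hbr]
      · rw [if_neg hci, if_neg hci, if_neg hci, add_zero]
    rw [← hS5sum]
    abel
end LeibnizAux

/-- `δ ∘ δ = 0`: the Leibniz cochain complex of a Leibniz algebra `L` with
coefficients in a representation `M` is indeed a complex. -/
theorem leibnizCoboundary_coboundary {K L M : Type*} [Field K]
    [AddCommGroup L] [Module K L] [AddCommGroup M] [Module K M]
    (bll : L → L → L) (blm : L → M → M) (bml : M → L → M)
    -- bilinearity of the bracket of L
    (h1 : ∀ x y z : L, bll (x + y) z = bll x z + bll y z)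
    (h2 : ∀ x y z : L, bll x (y + z) = bll x y + bll x z)
    (h3 : ∀ (c : K) (x y : L), bll (c • x) y = c • bll x y)
    (h4 : ∀ (c : K) (x y : L), bll x (c • y) = c • bll x y)
    -- bilinearity of the actions
    (h5 : ∀ (x y : L) (m : M), blm (x + y) m = blm x m + blm y m)
    (h6 : ∀ (x : L) (m m' : M), blm x (m + m') = blm x m + blm x m')
    (h7 : ∀ (c : K) (x : L) (m : M), blm (c • x) m = c • blm x m)
    (h8 : ∀ (c : K) (x : L) (m : M), blm x (c • m) = c • blm x m)
    (h9 : ∀ (m m' : M) (x : L), bml (m + m') x = bml m x + bml m' x)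
    (h10 : ∀ (m : M) (x y : L), bml m (x + y) = bml m x + bml m y)
    (h11 : ∀ (c : K) (m : M) (x : L), bml (c • m) x = c • bml m x)
    (h12 : ∀ (c : K) (m : M) (x : L), bml m (c • x) = c • bml m x)
    -- the Leibniz identity in L and its three mixed forms on the representation M
    (hL : ∀ x y z : L, bll x (bll y z) = bll (bll x y) z - bll (bll x z) y)
    (hM1 : ∀ (x y : L) (m : M), blm x (blm y m) = blm (bll x y) m - bml (blm x m) y)
    (hM2 : ∀ (x y : L) (m : M), blm x (bml m y) = bml (blm x m) y - blm (bll x y) m)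
    (hM3 : ∀ (m : M) (x y : L), bml m (bll x y) = bml (bml m x) y - bml (bml m y) x)
    -- a multilinear n-cochain f
    (n : ℕ) (f : (Fin n → L) → M)
    (hfadd : ∀ (x : Fin n → L) (i : Fin n) (a b : L),
      f (Function.update x i (a + b)) = f (Function.update x i a) + f (Function.update x i b))
    (hfsmul : ∀ (x : Fin n → L) (i : Fin n) (c : K) (a : L),
      f (Function.update x i (c • a)) = c • f (Function.update x i a)) :
    ∀ x : Fin (n + 2) → L,
      leibnizCoboundary (K := K) bll blm bml (n + 1) (leibnizCoboundary (K := K) bll blm bml n f) x = 0 := by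
  intro x
  have hinner : leibnizCoboundary (K := K) bll blm bml n f
      = fun y => ∑ j : Fin (n+1), ((-1:ℤ)^(j:ℕ)) • LeibnizAux.Dm bll blm bml n j f y :=
    funext fun y => LeibnizAux.delta_eq bll blm bml n f y
  rw [LeibnizAux.delta_eq bll blm bml (n+1) _ x]
  have hfzero : ∀ (y : Fin n → L) (i : Fin n), f (Function.update y i 0) = 0 := by
    intro y i
    have := hfsmul y i 0 0
    simpa using this
  have key : ∀ (p q : Fin (n+1)), (p:ℕ) ≤ (q:ℕ) →
      LeibnizAux.Dm bll blm bml (n+1) p.castSucc (LeibnizAux.Dm bll blm bml n q f) x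
        = LeibnizAux.Dm bll blm bml (n+1) q.succ (LeibnizAux.Dm bll blm bml n p f) x :=
    fun p q h => LeibnizAux.comm bll blm bml hL hM1 hM2 hM3 h6 h9 n f hfadd hfzero p q h x
  calc ∑ i : Fin (n+2), ((-1:ℤ)^(i:ℕ)) •
          LeibnizAux.Dm bll blm bml (n+1) i (leibnizCoboundary (K := K) bll blm bml n f) x
      = ∑ i : Fin (n+2), ∑ j : Fin (n+1), ((-1:ℤ)^((i:ℕ)+(j:ℕ))) •
          LeibnizAux.Dm bll blm bml (n+1) i (LeibnizAux.Dm bll blm bml n j f) x := by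
        refine Finset.sum_congr rfl fun i _ => ?_
        rw [hinner]
        rw [LeibnizAux.Dm_sum bll blm bml h6 h9 Finset.univ (n+1) i
          (fun (j : Fin (n+1)) => fun y => ((-1:ℤ)^(j:ℕ)) • LeibnizAux.Dm bll blm bml n j f y) x]
        rw [Finset.smul_sum]
        refine Finset.sum_congr rfl fun j _ => ?_
        rw [LeibnizAux.Dm_zsmul bll blm bml h6 h9 ((-1:ℤ)^(j:ℕ)) (n+1) i
          (LeibnizAux.Dm bll blm bml n j f) x]
        rw [smul_smul, ← pow_add]
    _ = 0 := LeibnizAux.pairing n _ key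
end

section
/- Given a Leibniz algebra L with H := HL^2(L;L) finite dimensional and a linear section μ: H → CL^2(L;L) sending each cohomology class to a representing cocycle, the bracket on L ⊕ Hom(H, L) defined by [(l₁,φ₁),(l₂,φ₂)] = ([l₁,l₂], ψ) with ψ(α) = μ(α)(l₁,l₂) + [φ₁(α), l₂] + [l₁, φ₂(α)] satisfies the Leibniz identity. -/
/-- The bracket on `C₁ ⊗ L ≅ L ⊕ Hom(H, L)` built from a section
`μ : H → CL²(L;L)`:
`[(l₁,φ₁),(l₂,φ₂)] = ([l₁,l₂], α ↦ μ(α)(l₁,l₂) + [φ₁(α),l₂] + [l₁,φ₂(α)])`. -/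
def infDefBracket {L H : Type*} [AddCommGroup L]
    (br : L → L → L) (μ : H → L → L → L) :
    (L × (H → L)) → (L × (H → L)) → (L × (H → L)) :=
  fun p q => (br p.1 q.1, fun α => μ α p.1 q.1 + br (p.2 α) q.1 + br p.1 (q.2 α))

/-- For a Leibniz algebra `L` with `H = HL²(L;L)` finite dimensional and a
section `μ` assigning to every class a representing cocycle, the bracket on
`L ⊕ Hom(H, L)` satisfies the Leibniz identity. -/
theorem infDefBracket_leibniz {K L H : Type*} [Field K] [CharZero K]
    [AddCommGroup L] [Module K L]
    [AddCommGroup H] [Module K H] [FiniteDimensional K H]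
    (br : L → L → L)
    (h_add_left : ∀ x y z : L, br (x + y) z = br x z + br y z)
    (h_add_right : ∀ x y z : L, br x (y + z) = br x y + br x z)
    (h_smul_left : ∀ (c : K) (x y : L), br (c • x) y = c • br x y)
    (h_smul_right : ∀ (c : K) (x y : L), br x (c • y) = c • br x y)
    (h_leibniz : ∀ x y z : L, br x (br y z) = br (br x y) z - br (br x z) y)
    (μ : H → L → L → L)
    (hμ_add_left : ∀ (α : H) (x y z : L), μ α (x + y) z = μ α x z + μ α y z)
    (hμ_add_right : ∀ (α : H) (x y z : L), μ α x (y + z) = μ α x y + μ α x z)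
    (hμ_smul_left : ∀ (α : H) (c : K) (x y : L), μ α (c • x) y = c • μ α x y)
    (hμ_smul_right : ∀ (α : H) (c : K) (x y : L), μ α x (c • y) = c • μ α x y)
    -- each μ(α) is a 2-cocycle: δ(μ α) = 0
    (hμ_cocycle : ∀ (α : H) (x y z : L),
      br x (μ α y z) + br (μ α x z) y - br (μ α x y) z
        - μ α (br x y) z + μ α (br x z) y + μ α x (br y z) = 0) :
    ∀ p q r : L × (H → L),
      infDefBracket br μ p (infDefBracket br μ q r)
        = infDefBracket br μ (infDefBracket br μ p q) r
          - infDefBracket br μ (infDefBracket br μ p r) q := by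
  intro p q r
  have key : ∀ (α : H) (x y z : L), br x (μ α y z) =
      br (μ α x y) z - br (μ α x z) y + μ α (br x y) z - μ α (br x z) y
        - μ α x (br y z) := by
    intro α x y z
    have h := hμ_cocycle α x y z
    rw [← sub_eq_zero, ← h]
    abel
  ext
  · exact h_leibniz _ _ _
  · simp only [infDefBracket, Prod.fst, Prod.snd, Prod.sub_def, Pi.sub_apply]
    simp only [h_add_left, h_add_right]
    rw [key, h_leibniz (p.2 _) q.1 r.1, h_leibniz p.1 (q.2 _) r.1,
      h_leibniz p.1 q.1 (r.2 _)]
    abel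
end

section
/- The Leibniz algebra structure on C₁ ⊗ L (where C₁ = K ⊕ H′) constructed from a section μ: H → CL^2(L;L) is, up to isomorphism, independent of the choice of μ: if μ and μ′ are two such sections, with μ′ - μ = δγ for a linear map γ: H → CL^1(L;L), then ρ(l, φ) = (l, ψ) with ψ(α) = φ(α) + γ(α)(l) is a C₁-linear Leibniz algebra isomorphism between the two structures on L ⊕ Hom(H, L). -/
/-- The map `ρ(l, φ) = (l, α ↦ φ(α) + γ(α)(l))` on `L ⊕ Hom(H,L)`. -/
def infDefIso {L H : Type*} [AddCommGroup L] (γ : H → L → L) :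
    (L × (H → L)) → (L × (H → L)) :=
  fun p => (p.1, fun α => p.2 α + γ α p.1)

/-- Up to isomorphism the infinitesimal deformation with base `C₁ = K ⊕ H′`
does not depend on the choice of the section `μ`: if `μ′ - μ = δγ` then
`ρ(l,φ) = (l, φ + γ(·)(l))` is a `C₁`-linear Leibniz algebra isomorphism
between the two bracket structures on `L ⊕ Hom(H,L)`. -/
theorem infDef_independent_of_section {K L H : Type*} [Field K] [CharZero K]
    [AddCommGroup L] [Module K L]
    [AddCommGroup H] [Module K H] [FiniteDimensional K H]
    (br : L → L → L)
    (h_add_left : ∀ x y z : L, br (x + y) z = br x z + br y z)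
    (h_add_right : ∀ x y z : L, br x (y + z) = br x y + br x z)
    (h_smul_left : ∀ (c : K) (x y : L), br (c • x) y = c • br x y)
    (h_smul_right : ∀ (c : K) (x y : L), br x (c • y) = c • br x y)
    (h_leibniz : ∀ x y z : L, br x (br y z) = br (br x y) z - br (br x z) y)
    (μ μ' : H → L → L → L)
    (hμ_cocycle : ∀ (α : H) (x y z : L),
      br x (μ α y z) + br (μ α x z) y - br (μ α x y) z
        - μ α (br x y) z + μ α (br x z) y + μ α x (br y z) = 0)
    (hμ'_cocycle : ∀ (α : H) (x y z : L),
      br x (μ' α y z) + br (μ' α x z) y - br (μ' α x y) z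
        - μ' α (br x y) z + μ' α (br x z) y + μ' α x (br y z) = 0)
    -- γ : H → CL¹(L;L), each γ(α) linear
    (γ : H → L → L)
    (hγ_add : ∀ (α : H) (x y : L), γ α (x + y) = γ α x + γ α y)
    (hγ_smul : ∀ (α : H) (c : K) (x : L), γ α (c • x) = c • γ α x)
    -- μ′ - μ = δγ
    (hδγ : ∀ (α : H) (x y : L),
      μ' α x y - μ α x y = br x (γ α y) + br (γ α x) y - γ α (br x y)) :
    Function.Bijective (infDefIso (L := L) (H := H) γ)
      ∧ (∀ p q : L × (H → L), infDefIso γ (p + q) = infDefIso γ p + infDefIso γ q)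
      ∧ (∀ (c : K) (p : L × (H → L)), infDefIso γ (c • p) = c • infDefIso γ p)
      ∧ (∀ p q : L × (H → L),
          infDefIso γ (infDefBracket br μ' p q)
            = infDefBracket br μ (infDefIso γ p) (infDefIso γ q)) := by
  refine ⟨⟨?_, ?_⟩, ?_, ?_, ?_⟩
  · intro p q h
    simp only [infDefIso, Prod.mk.injEq] at h
    obtain ⟨h1, h2⟩ := h
    ext
    · exact h1
    · rename_i α
      have := congrFun h2 α
      rw [h1] at this
      exact add_right_cancel this
  · intro q
    refine ⟨(q.1, fun α => q.2 α - γ α q.1), ?_⟩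
    simp [infDefIso]
  · intro p q
    ext
    · rfl
    · rename_i α
      simp [infDefIso, hγ_add]
      abel
  · intro c p
    ext
    · rfl
    · rename_i α
      simp [infDefIso, hγ_smul, smul_add]
  · intro p q
    ext
    · rfl
    · rename_i α
      simp only [infDefIso, infDefBracket, h_add_left, h_add_right]
      have h := hδγ α p.1 q.1
      have h2 := sub_eq_iff_eq_add.mp h
      rw [h2]
      abel
end

section
/- For an infinitesimal deformation λ of a Leibniz algebra L with finite dimensional local base (A, 𝔐) with 𝔐² = 0, and any ξ ∈ 𝔐′ (extended to A′ with ξ(1) = 0), the 2-cochain α_{λ,ξ}(l₁,l₂) := (ξ ⊗ id)([1⊗l₁, 1⊗l₂]_λ) is a Leibniz 2-cocycle: δα_{λ,ξ} = 0. -/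
open TensorProduct

/-- `ε ⊗ id : A ⊗ L → K ⊗ L ≅ L` for a `K`-linear augmentation-like map `ξ : A → K`. -/
noncomputable def reduceTensor {K A L : Type*} [Field K] [CommRing A] [Algebra K A]
    [AddCommGroup L] [Module K L] (ξ : A →ₗ[K] K) :
    A ⊗[K] L →ₗ[K] L :=
  (TensorProduct.lid K L).toLinearMap.comp (TensorProduct.map ξ LinearMap.id)

/-- The 2-cochain `α_{λ,ξ}(l₁,l₂) = (ξ ⊗ id)([1⊗l₁, 1⊗l₂]_λ)`. -/
noncomputable def alphaCochain {K A L : Type*} [Field K] [CommRing A] [Algebra K A]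
    [AddCommGroup L] [Module K L] (ξ : A →ₗ[K] K)
    (br : A ⊗[K] L → A ⊗[K] L → A ⊗[K] L) (l₁ l₂ : L) : L :=
  reduceTensor ξ (br ((1 : A) ⊗ₜ[K] l₁) ((1 : A) ⊗ₜ[K] l₂))

/-- For an infinitesimal deformation `λ` of a Leibniz algebra `L` with finite
dimensional local base `(A, 𝔐)` with `𝔐² = 0`, and `ξ ∈ 𝔐′` (extended to `A′`
with `ξ(1) = 0`), the 2-cochain `α_{λ,ξ}` is a Leibniz 2-cocycle. -/
theorem alphaCochain_is_cocycle {K A L : Type*} [Field K]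
    [CommRing A] [Algebra K A] [FiniteDimensional K A] [IsLocalRing A]
    [AddCommGroup L] [Module K L]
    -- the Leibniz algebra L
    (bll : L → L → L)
    (h_add_left : ∀ x y z : L, bll (x + y) z = bll x z + bll y z)
    (h_add_right : ∀ x y z : L, bll x (y + z) = bll x y + bll x z)
    (h_smul_left : ∀ (c : K) (x y : L), bll (c • x) y = c • bll x y)
    (h_smul_right : ∀ (c : K) (x y : L), bll x (c • y) = c • bll x y)
    (h_leibniz : ∀ x y z : L, bll x (bll y z) = bll (bll x y) z - bll (bll x z) y)
    -- the augmentation ε with 𝔐 = ker ε and 𝔐² = 0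
    (ε : A →ₐ[K] K)
    (hM2 : ∀ a b : A, ε a = 0 → ε b = 0 → a * b = 0)
    -- the deformation bracket on A ⊗ L : A-bilinear, Leibniz, compatible with ε⊗id
    (br : A ⊗[K] L → A ⊗[K] L → A ⊗[K] L)
    (hbr_add_left : ∀ x y z : A ⊗[K] L, br (x + y) z = br x z + br y z)
    (hbr_add_right : ∀ x y z : A ⊗[K] L, br x (y + z) = br x y + br x z)
    (hbr_smul_left : ∀ (a : A) (x y : A ⊗[K] L), br (a • x) y = a • br x y)
    (hbr_smul_right : ∀ (a : A) (x y : A ⊗[K] L), br x (a • y) = a • br x y)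
    (hbr_leibniz : ∀ x y z : A ⊗[K] L, br x (br y z) = br (br x y) z - br (br x z) y)
    (hcompat : ∀ x y : A ⊗[K] L,
      reduceTensor ε.toLinearMap (br x y)
        = bll (reduceTensor ε.toLinearMap x) (reduceTensor ε.toLinearMap y))
    -- ξ ∈ 𝔐′ extended by ξ(1) = 0
    (ξ : A →ₗ[K] K) (hξ1 : ξ 1 = 0) :
    ∀ l₁ l₂ l₃ : L,
      bll l₁ (alphaCochain ξ br l₂ l₃) + bll (alphaCochain ξ br l₁ l₃) l₂
        - bll (alphaCochain ξ br l₁ l₂) l₃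
        - alphaCochain ξ br (bll l₁ l₂) l₃ + alphaCochain ξ br (bll l₁ l₃) l₂
        + alphaCochain ξ br l₁ (bll l₂ l₃) = 0 := by
  intro l₁ l₂ l₃
  have hRtmul : ∀ (η : A →ₗ[K] K) (a : A) (l : L), reduceTensor η (a ⊗ₜ[K] l) = η a • l := by
    intro η a l; simp [reduceTensor]
  -- the submodule 𝔐 ⊗ L
  set S : Submodule K (A ⊗[K] L) :=
    Submodule.span K {x : A ⊗[K] L | ∃ (a : A) (l : L), ε a = 0 ∧ x = a ⊗ₜ[K] l} with hS
  -- decomposition x = 1 ⊗ (ε⊗id) x + m with m ∈ S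
  have hdecomp : ∀ x : A ⊗[K] L,
      ∃ m ∈ S, x = (1 : A) ⊗ₜ[K] (reduceTensor ε.toLinearMap x) + m := by
    intro x
    induction x using TensorProduct.induction_on with
    | zero => exact ⟨0, S.zero_mem, by simp⟩
    | tmul a l =>
        refine ⟨(a - algebraMap K A (ε a)) ⊗ₜ[K] l,
          Submodule.subset_span ⟨a - algebraMap K A (ε a), l, by simp, rfl⟩, ?_⟩
        rw [hRtmul]
        have h1 : (1 : A) ⊗ₜ[K] ((ε.toLinearMap a) • l) = algebraMap K A (ε a) ⊗ₜ[K] l := by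
          rw [TensorProduct.tmul_smul, TensorProduct.smul_tmul', Algebra.algebraMap_eq_smul_one]
          rfl
        rw [h1, ← TensorProduct.add_tmul, add_sub_cancel]
    | add x y hx hy =>
        obtain ⟨m1, hm1, e1⟩ := hx
        obtain ⟨m2, hm2, e2⟩ := hy
        refine ⟨m1 + m2, S.add_mem hm1 hm2, ?_⟩
        rw [map_add, TensorProduct.tmul_add]
        conv_lhs => rw [e1, e2]
        abel
  -- 𝔐 kills S
  have hkill : ∀ a : A, ε a = 0 → ∀ m ∈ S, a • m = 0 := by
    intro a ha m hm
    induction hm using Submodule.span_induction with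
    | mem x hx =>
        obtain ⟨b, w, hb, rfl⟩ := hx
        rw [TensorProduct.smul_tmul', smul_eq_mul, hM2 a b ha hb, TensorProduct.zero_tmul]
    | zero => simp
    | add x y _ _ ihx ihy => rw [smul_add, ihx, ihy, add_zero]
    | smul c x _ ih => rw [smul_comm, ih, smul_zero]
  -- K-linearity of br
  have hbr_ksmul_right : ∀ (c : K) (x y : A ⊗[K] L), br x (c • y) = c • br x y := by
    intro c x y
    rw [← algebraMap_smul A c y, hbr_smul_right, algebraMap_smul]
  have hbr_ksmul_left : ∀ (c : K) (x y : A ⊗[K] L), br (c • x) y = c • br x y := by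
    intro c x y
    rw [← algebraMap_smul A c x, hbr_smul_left, algebraMap_smul]
  have hbr_zero_right : ∀ x : A ⊗[K] L, br x 0 = 0 := by
    intro x
    have := hbr_ksmul_right 0 x 0
    simpa using this
  have hbr_zero_left : ∀ x : A ⊗[K] L, br 0 x = 0 := by
    intro x
    have := hbr_ksmul_left 0 0 x
    simpa using this
  have hbll_zero_right : ∀ x : L, bll x 0 = 0 := by
    intro x
    have := h_smul_right 0 x 0
    simpa using this
  have hbll_zero_left : ∀ x : L, bll 0 x = 0 := by
    intro x
    have := h_smul_left 0 0 x
    simpa using this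
  -- value of ε⊗id on the bracket of pure 1⊗ tensors
  have eb : ∀ x y : L,
      reduceTensor ε.toLinearMap (br ((1 : A) ⊗ₜ[K] x) ((1 : A) ⊗ₜ[K] y)) = bll x y := by
    intro x y
    rw [hcompat, hRtmul, hRtmul]
    simp
  -- key lemma, right slot
  have hright : ∀ (l : L), ∀ m ∈ S,
      reduceTensor ξ (br ((1 : A) ⊗ₜ[K] l) m) = bll l (reduceTensor ξ m) := by
    intro l m hm
    induction hm using Submodule.span_induction with
    | mem x hx =>
        obtain ⟨a, w, ha, rfl⟩ := hx
        obtain ⟨m', hm', hdec⟩ := hdecomp (br ((1 : A) ⊗ₜ[K] l) ((1 : A) ⊗ₜ[K] w))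
        rw [eb] at hdec
        have hsm : a ⊗ₜ[K] w = a • ((1 : A) ⊗ₜ[K] w) := by
          rw [TensorProduct.smul_tmul', smul_eq_mul, mul_one]
        rw [hsm, hbr_smul_right, hdec, smul_add, hkill a ha m' hm', add_zero,
          TensorProduct.smul_tmul', smul_eq_mul, mul_one, hRtmul, ← hsm, hRtmul,
          h_smul_right]
    | zero => rw [hbr_zero_right, map_zero, hbll_zero_right]
    | add x y _ _ ihx ihy =>
        rw [hbr_add_right, map_add, map_add, ihx, ihy, h_add_right]
    | smul c x _ ih =>
        rw [hbr_ksmul_right, map_smul, map_smul, ih, h_smul_right]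
  -- key lemma, left slot
  have hleft : ∀ (l : L), ∀ m ∈ S,
      reduceTensor ξ (br m ((1 : A) ⊗ₜ[K] l)) = bll (reduceTensor ξ m) l := by
    intro l m hm
    induction hm using Submodule.span_induction with
    | mem x hx =>
        obtain ⟨a, w, ha, rfl⟩ := hx
        obtain ⟨m', hm', hdec⟩ := hdecomp (br ((1 : A) ⊗ₜ[K] w) ((1 : A) ⊗ₜ[K] l))
        rw [eb] at hdec
        have hsm : a ⊗ₜ[K] w = a • ((1 : A) ⊗ₜ[K] w) := by
          rw [TensorProduct.smul_tmul', smul_eq_mul, mul_one]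
        rw [hsm, hbr_smul_left, hdec, smul_add, hkill a ha m' hm', add_zero,
          TensorProduct.smul_tmul', smul_eq_mul, mul_one, hRtmul, ← hsm, hRtmul,
          h_smul_left]
    | zero => rw [hbr_zero_left, map_zero, hbll_zero_left]
    | add x y _ _ ihx ihy =>
        rw [hbr_add_left, map_add, map_add, ihx, ihy, h_add_left]
    | smul c x _ ih =>
        rw [hbr_ksmul_left, map_smul, map_smul, ih, h_smul_left]
  -- R kills 1 ⊗ x
  have hR1 : ∀ x : L, reduceTensor ξ ((1 : A) ⊗ₜ[K] x) = 0 := by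
    intro x; rw [hRtmul, hξ1, zero_smul]
  -- decompositions of the three pure brackets
  obtain ⟨m12, hm12, d12⟩ := hdecomp (br ((1 : A) ⊗ₜ[K] l₁) ((1 : A) ⊗ₜ[K] l₂))
  obtain ⟨m13, hm13, d13⟩ := hdecomp (br ((1 : A) ⊗ₜ[K] l₁) ((1 : A) ⊗ₜ[K] l₃))
  obtain ⟨m23, hm23, d23⟩ := hdecomp (br ((1 : A) ⊗ₜ[K] l₂) ((1 : A) ⊗ₜ[K] l₃))
  rw [eb] at d12 d13 d23
  -- α values in terms of the m's
  have hα12 : alphaCochain ξ br l₁ l₂ = reduceTensor ξ m12 := by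
    rw [alphaCochain, d12, map_add, hR1, zero_add]
  have hα13 : alphaCochain ξ br l₁ l₃ = reduceTensor ξ m13 := by
    rw [alphaCochain, d13, map_add, hR1, zero_add]
  have hα23 : alphaCochain ξ br l₂ l₃ = reduceTensor ξ m23 := by
    rw [alphaCochain, d23, map_add, hR1, zero_add]
  -- apply R to the Leibniz identity for br
  have key := congrArg (reduceTensor ξ)
    (hbr_leibniz ((1 : A) ⊗ₜ[K] l₁) ((1 : A) ⊗ₜ[K] l₂) ((1 : A) ⊗ₜ[K] l₃))
  rw [d23, hbr_add_right, map_add, hright l₁ m23 hm23] at key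
  conv at key => rw [d12, d13]
  rw [hbr_add_left, hbr_add_left, map_sub, map_add, map_add,
    hleft l₃ m12 hm12, hleft l₂ m13 hm13] at key
  have key' : alphaCochain ξ br l₁ (bll l₂ l₃) + bll l₁ (reduceTensor ξ m23)
      = (alphaCochain ξ br (bll l₁ l₂) l₃ + bll (reduceTensor ξ m12) l₃)
        - (alphaCochain ξ br (bll l₁ l₃) l₂ + bll (reduceTensor ξ m13) l₂) := by
    simpa [alphaCochain] using key
  rw [hα12, hα13, hα23]
  have grearr : bll l₁ (reduceTensor ξ m23) + bll (reduceTensor ξ m13) l₂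
        - bll (reduceTensor ξ m12) l₃
        - alphaCochain ξ br (bll l₁ l₂) l₃ + alphaCochain ξ br (bll l₁ l₃) l₂
        + alphaCochain ξ br l₁ (bll l₂ l₃)
      = (alphaCochain ξ br l₁ (bll l₂ l₃) + bll l₁ (reduceTensor ξ m23))
        - ((alphaCochain ξ br (bll l₁ l₂) l₃ + bll (reduceTensor ξ m12) l₃)
          - (alphaCochain ξ br (bll l₁ l₃) l₂ + bll (reduceTensor ξ m13) l₂)) := by
    abel
  rw [grearr, key', sub_self]
end

section
/- Two infinitesimal deformations λ₁ and λ₂ of a Leibniz algebra L with the same finite dimensional base A (with 𝔐² = 0) are equivalent if and only if for every ξ ∈ 𝔐′ the cocycles α_{λ₁,ξ} and α_{λ₂,ξ} are cohomologous in HL²(L;L). -/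
open TensorProduct

section Aux
variable {K A L : Type*} [Field K] [CommRing A] [Algebra K A]
  [AddCommGroup L] [Module K L]

lemma reduceTensor_tmul (ξ : A →ₗ[K] K) (a : A) (l : L) :
    reduceTensor ξ (a ⊗ₜ[K] l) = ξ a • l := by
  simp [reduceTensor]

lemma reduceTensor_eps_tmul (ε : A →ₐ[K] K) (a : A) (l : L) :
    reduceTensor (K := K) (L := L) ε.toLinearMap (a ⊗ₜ[K] l) = ε a • l := by
  simp [reduceTensor]

lemma reduceTensor_smul (ε : A →ₐ[K] K) (a : A) (z : A ⊗[K] L) :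
    reduceTensor ε.toLinearMap (a • z) = ε a • reduceTensor ε.toLinearMap z := by
  induction z using TensorProduct.induction_on with
  | zero => simp
  | tmul b l => rw [smul_tmul']; simp [reduceTensor_eps_tmul, mul_smul, smul_eq_mul]
  | add x y hx hy => simp only [smul_add, map_add, hx, hy]

lemma smul_of_eps_zero (ε : A →ₐ[K] K) (hM2 : ∀ a b : A, ε a = 0 → ε b = 0 → a * b = 0)
    (m : A) (hm : ε m = 0) (z : A ⊗[K] L) :
    m • z = m ⊗ₜ[K] reduceTensor ε.toLinearMap z := by
  induction z using TensorProduct.induction_on with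
  | zero => simp
  | tmul a l =>
      rw [smul_tmul', reduceTensor_eps_tmul, tmul_smul, smul_tmul']
      congr 1
      have h0 : m * (a - algebraMap K A (ε a)) = 0 := by
        apply hM2 _ _ hm
        simp
      have : m * a - ε a • m = 0 := by
        rw [Algebra.smul_def, mul_comm (algebraMap K A (ε a)) m, ← mul_sub]
        exact h0
      have := sub_eq_zero.mp this
      simp [smul_eq_mul, this, mul_comm]
  | add x y hx hy => rw [smul_add, hx, hy, map_add, tmul_add]

lemma tmul_eq_smul_one_tmul (a : A) (l : L) :
    a ⊗ₜ[K] l = a • ((1 : A) ⊗ₜ[K] l) := by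
  rw [smul_tmul', smul_eq_mul, mul_one]

end Aux

set_option maxHeartbeats 2000000

/-- Two infinitesimal deformations `λ₁`, `λ₂` of a Leibniz algebra `L` with the
same finite dimensional base `A` (with `𝔐² = 0`) are equivalent if and only if
for every `ξ ∈ 𝔐′` the cocycles `α_{λ₁,ξ}` and `α_{λ₂,ξ}` are cohomologous. -/
theorem equivalent_iff_cohomologous {K A L : Type*} [Field K]
    [CommRing A] [Algebra K A] [FiniteDimensional K A] [IsLocalRing A]
    [AddCommGroup L] [Module K L]
    (bll : L → L → L)
    (h_add_left : ∀ x y z : L, bll (x + y) z = bll x z + bll y z)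
    (h_add_right : ∀ x y z : L, bll x (y + z) = bll x y + bll x z)
    (h_smul_left : ∀ (c : K) (x y : L), bll (c • x) y = c • bll x y)
    (h_smul_right : ∀ (c : K) (x y : L), bll x (c • y) = c • bll x y)
    (h_leibniz : ∀ x y z : L, bll x (bll y z) = bll (bll x y) z - bll (bll x z) y)
    (ε : A →ₐ[K] K)
    (hM2 : ∀ a b : A, ε a = 0 → ε b = 0 → a * b = 0)
    (br₁ br₂ : A ⊗[K] L → A ⊗[K] L → A ⊗[K] L)
    (hbr₁_add_left : ∀ x y z, br₁ (x + y) z = br₁ x z + br₁ y z)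
    (hbr₁_add_right : ∀ x y z, br₁ x (y + z) = br₁ x y + br₁ x z)
    (hbr₁_smul_left : ∀ (a : A) x y, br₁ (a • x) y = a • br₁ x y)
    (hbr₁_smul_right : ∀ (a : A) x y, br₁ x (a • y) = a • br₁ x y)
    (hbr₁_leibniz : ∀ x y z, br₁ x (br₁ y z) = br₁ (br₁ x y) z - br₁ (br₁ x z) y)
    (hcompat₁ : ∀ x y,
      reduceTensor ε.toLinearMap (br₁ x y)
        = bll (reduceTensor ε.toLinearMap x) (reduceTensor ε.toLinearMap y))
    (hbr₂_add_left : ∀ x y z, br₂ (x + y) z = br₂ x z + br₂ y z)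
    (hbr₂_add_right : ∀ x y z, br₂ x (y + z) = br₂ x y + br₂ x z)
    (hbr₂_smul_left : ∀ (a : A) x y, br₂ (a • x) y = a • br₂ x y)
    (hbr₂_smul_right : ∀ (a : A) x y, br₂ x (a • y) = a • br₂ x y)
    (hbr₂_leibniz : ∀ x y z, br₂ x (br₂ y z) = br₂ (br₂ x y) z - br₂ (br₂ x z) y)
    (hcompat₂ : ∀ x y,
      reduceTensor ε.toLinearMap (br₂ x y)
        = bll (reduceTensor ε.toLinearMap x) (reduceTensor ε.toLinearMap y)) :
    -- equivalence of the two deformations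
    (∃ Φ : (A ⊗[K] L) ≃ₗ[A] (A ⊗[K] L),
        (∀ x, reduceTensor ε.toLinearMap (Φ x) = reduceTensor ε.toLinearMap x)
        ∧ ∀ x y, Φ (br₁ x y) = br₂ (Φ x) (Φ y))
    ↔
    -- the associated cocycles are cohomologous for every ξ ∈ 𝔐′
    (∀ ξ : A →ₗ[K] K, ξ 1 = 0 →
      ∃ g : L →ₗ[K] L, ∀ l₁ l₂ : L,
        alphaCochain ξ br₁ l₁ l₂ - alphaCochain ξ br₂ l₁ l₂
          = bll l₁ (g l₂) + bll (g l₁) l₂ - g (bll l₁ l₂)) := by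
  classical
  -- basis machinery for the maximal ideal ker ε
  set Mker := LinearMap.ker ε.toLinearMap with hMker
  set n := Module.finrank K Mker with hn
  let b : Module.Basis (Fin n) K Mker := Module.finBasis K Mker
  let m : Fin n → A := fun i => (b i : A)
  have hmε : ∀ i, ε (m i) = 0 := fun i => (b i).2
  let p : A →ₗ[K] A := LinearMap.id - (Algebra.linearMap K A).comp ε.toLinearMap
  have hpmem : ∀ a, p a ∈ Mker := by
    intro a
    simp [p, Mker, LinearMap.mem_ker]
  let π : A →ₗ[K] Mker := p.codRestrict Mker hpmem
  let ξf : Fin n → (A →ₗ[K] K) := fun i => (b.coord i).comp π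
  have hξ1 : ∀ i, ξf i 1 = 0 := by
    intro i
    have : π 1 = 0 := by ext; simp [π, p]
    simp [ξf, this]
  have hdecompA : ∀ a : A, a = algebraMap K A (ε a) + ∑ i, ξf i a • m i := by
    intro a
    have h1 : (↑(π a) : A) = a - algebraMap K A (ε a) := rfl
    have h2 : (π a : Mker) = ∑ i, (b.repr (π a)) i • b i := (b.sum_repr (π a)).symm
    have h3 : (↑(π a) : A) = ∑ i, ξf i a • m i := by
      rw [h2]; push_cast; rfl
    rw [← h3, h1]; ring
  -- decomposition of tensors
  have hdecomp : ∀ z : A ⊗[K] L, z = (1 : A) ⊗ₜ[K] reduceTensor ε.toLinearMap z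
      + ∑ i, m i ⊗ₜ[K] reduceTensor (ξf i) z := by
    intro z
    induction z using TensorProduct.induction_on with
    | zero => simp
    | tmul a l =>
        rw [reduceTensor_eps_tmul]
        simp only [reduceTensor_tmul]
        calc a ⊗ₜ[K] l = (algebraMap K A (ε a) + ∑ i, ξf i a • m i) ⊗ₜ[K] l := by
              rw [← hdecompA a]
          _ = _ := by
              rw [add_tmul, sum_tmul]
              congr 1
              · rw [Algebra.algebraMap_eq_smul_one, smul_tmul]
              · exact Finset.sum_congr rfl fun i _ => by rw [smul_tmul]
    | add x y hx hy =>
        conv_lhs => rw [hx, hy]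
        simp only [map_add, tmul_add, Finset.sum_add_distrib]
        abel
  have hRone : ∀ l : L, reduceTensor ε.toLinearMap ((1 : A) ⊗ₜ[K] l) = l := by
    intro l; rw [reduceTensor_eps_tmul]; simp
  -- packaged bilinear maps
  let Bll : L →ₗ[K] L →ₗ[K] L :=
    LinearMap.mk₂ K bll h_add_left h_smul_left h_add_right h_smul_right
  constructor
  · rintro ⟨Φ, hΦε, hΦbr⟩ ξ hξ
    let g : L →ₗ[K] L := (reduceTensor ξ).comp
      ((Φ.toLinearMap.restrictScalars K).comp (TensorProduct.mk K A L 1))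
    have hg : ∀ l : L, g l = reduceTensor ξ (Φ ((1 : A) ⊗ₜ[K] l)) := fun l => rfl
    have hξone : ∀ l : L, reduceTensor ξ ((1 : A) ⊗ₜ[K] l) = 0 := by
      intro l; rw [reduceTensor_tmul, hξ, zero_smul]
    -- Φ fixes elements with zero reduction
    have hΦfix : ∀ w : A ⊗[K] L, reduceTensor ε.toLinearMap w = 0 → Φ w = w := by
      intro w hw
      have hterm : ∀ i, Φ (m i ⊗ₜ[K] reduceTensor (ξf i) w)
          = m i ⊗ₜ[K] reduceTensor (ξf i) w := by
        intro i
        rw [_root_.tmul_eq_smul_one_tmul, LinearEquiv.map_smul Φ (m i)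
          ((1:A) ⊗ₜ[K] reduceTensor (ξf i) w)]
        have hkey := smul_of_eps_zero (L := L) ε hM2 (m i) (hmε i)
          (Φ ((1:A) ⊗ₜ[K] reduceTensor (ξf i) w))
        rw [hkey]
        rw [hΦε]
        rw [hRone]
        exact _root_.tmul_eq_smul_one_tmul (K := K) (A := A) (L := L) (m i) _
      conv_lhs => rw [hdecomp w, hw]
      rw [map_add, map_sum, tmul_zero, map_zero]
      conv_rhs => rw [hdecomp w, hw, tmul_zero]
      rw [Finset.sum_congr rfl fun i _ => hterm i]
    have hred : ∀ z : A ⊗[K] L, reduceTensor ξ (Φ z)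
        = reduceTensor ξ z + g (reduceTensor ε.toLinearMap z) := by
      intro z
      have hw : reduceTensor ε.toLinearMap
          (z - (1:A) ⊗ₜ[K] reduceTensor ε.toLinearMap z) = 0 := by
        rw [map_sub, hRone, sub_self]
      have hz : z = (1:A) ⊗ₜ[K] reduceTensor ε.toLinearMap z
          + (z - (1:A) ⊗ₜ[K] reduceTensor ε.toLinearMap z) := by abel
      conv_lhs => rw [hz]
      rw [map_add, hΦfix _ hw, map_add, ← hg, map_sub, hξone, sub_zero]
      abel
    -- reduction of br₂ on ideal elements
    have h2a : ∀ w y : A ⊗[K] L, reduceTensor ε.toLinearMap w = 0 →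
        reduceTensor ξ (br₂ w y)
          = bll (reduceTensor ξ w) (reduceTensor ε.toLinearMap y) := by
      intro w y hw
      have hterm : ∀ i, br₂ (m i ⊗ₜ[K] reduceTensor (ξf i) w) y
          = m i ⊗ₜ[K] bll (reduceTensor (ξf i) w) (reduceTensor ε.toLinearMap y) := by
        intro i
        rw [_root_.tmul_eq_smul_one_tmul, hbr₂_smul_left,
          smul_of_eps_zero (L := L) ε hM2 (m i) (hmε i), hcompat₂, hRone]
      have hsum : ∀ u v : L, ∀ s : Finset (Fin n), ∀ f : Fin n → A ⊗[K] L,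
          True := fun _ _ _ _ => trivial
      have hw2 : reduceTensor ξ w = ∑ i, ξ (m i) • reduceTensor (ξf i) w := by
        conv_lhs => rw [hdecomp w, hw, tmul_zero]
        rw [zero_add, map_sum]
        exact Finset.sum_congr rfl fun i _ => reduceTensor_tmul ξ _ _
      have hbrsum : br₂ w y = ∑ i, br₂ (m i ⊗ₜ[K] reduceTensor (ξf i) w) y := by
        conv_lhs => rw [hdecomp w, hw, tmul_zero, zero_add]
        -- br₂ of a finite sum in the first argument
        induction (Finset.univ : Finset (Fin n)) using Finset.induction_on with
        | empty =>
            simp only [Finset.sum_empty]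
            have : br₂ (0 : A ⊗[K] L) y = 0 := by
              have := hbr₂_smul_left 0 0 y
              simpa using this
            exact this
        | insert _ _ hx ih =>
            rw [Finset.sum_insert hx, Finset.sum_insert hx, hbr₂_add_left, ih]
      rw [hbrsum, Finset.sum_congr rfl fun i _ => hterm i, map_sum, hw2]
      simp only [reduceTensor_tmul]
      have : ∀ i : Fin n, ξ (m i) • bll (reduceTensor (ξf i) w) (reduceTensor ε.toLinearMap y)
          = bll (ξ (m i) • reduceTensor (ξf i) w) (reduceTensor ε.toLinearMap y) :=
        fun i => (h_smul_left _ _ _).symm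
      rw [Finset.sum_congr rfl fun i _ => this i]
      -- ∑ bll (cᵢ • vᵢ) u = bll (∑ cᵢ • vᵢ) u
      have : ∑ i, bll (ξ (m i) • reduceTensor (ξf i) w) (reduceTensor ε.toLinearMap y)
          = Bll (∑ i, ξ (m i) • reduceTensor (ξf i) w) (reduceTensor ε.toLinearMap y) := by
        rw [map_sum, LinearMap.sum_apply]; rfl
      rw [this]
      rfl
    have h2b : ∀ y w : A ⊗[K] L, reduceTensor ε.toLinearMap w = 0 →
        reduceTensor ξ (br₂ y w)
          = bll (reduceTensor ε.toLinearMap y) (reduceTensor ξ w) := by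
      intro y w hw
      have hterm : ∀ i, br₂ y (m i ⊗ₜ[K] reduceTensor (ξf i) w)
          = m i ⊗ₜ[K] bll (reduceTensor ε.toLinearMap y) (reduceTensor (ξf i) w) := by
        intro i
        rw [_root_.tmul_eq_smul_one_tmul, hbr₂_smul_right,
          smul_of_eps_zero (L := L) ε hM2 (m i) (hmε i), hcompat₂, hRone]
      have hw2 : reduceTensor ξ w = ∑ i, ξ (m i) • reduceTensor (ξf i) w := by
        conv_lhs => rw [hdecomp w, hw, tmul_zero]
        rw [zero_add, map_sum]
        exact Finset.sum_congr rfl fun i _ => reduceTensor_tmul ξ _ _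
      have hbrsum : br₂ y w = ∑ i, br₂ y (m i ⊗ₜ[K] reduceTensor (ξf i) w) := by
        conv_lhs => rw [hdecomp w, hw, tmul_zero, zero_add]
        induction (Finset.univ : Finset (Fin n)) using Finset.induction_on with
        | empty =>
            simp only [Finset.sum_empty]
            have : br₂ y (0 : A ⊗[K] L) = 0 := by
              have := hbr₂_smul_right 0 y 0
              simpa using this
            exact this
        | insert _ _ hx ih =>
            rw [Finset.sum_insert hx, Finset.sum_insert hx, hbr₂_add_right, ih]
      rw [hbrsum, Finset.sum_congr rfl fun i _ => hterm i, map_sum, hw2]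
      simp only [reduceTensor_tmul]
      have : ∀ i : Fin n, ξ (m i) • bll (reduceTensor ε.toLinearMap y) (reduceTensor (ξf i) w)
          = bll (reduceTensor ε.toLinearMap y) (ξ (m i) • reduceTensor (ξf i) w) :=
        fun i => (h_smul_right _ _ _).symm
      rw [Finset.sum_congr rfl fun i _ => this i]
      have : ∑ i, bll (reduceTensor ε.toLinearMap y) (ξ (m i) • reduceTensor (ξf i) w)
          = Bll (reduceTensor ε.toLinearMap y) (∑ i, ξ (m i) • reduceTensor (ξf i) w) := by
        rw [map_sum]; rfl
      rw [this]
      rfl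
    refine ⟨g, fun l₁ l₂ => ?_⟩
    -- main computation
    set w₁ := Φ ((1:A) ⊗ₜ[K] l₁) - (1:A) ⊗ₜ[K] l₁ with hw₁def
    set w₂ := Φ ((1:A) ⊗ₜ[K] l₂) - (1:A) ⊗ₜ[K] l₂ with hw₂def
    have hw₁ : reduceTensor ε.toLinearMap w₁ = 0 := by
      rw [hw₁def, map_sub, hΦε, sub_self]
    have hw₂ : reduceTensor ε.toLinearMap w₂ = 0 := by
      rw [hw₂def, map_sub, hΦε, sub_self]
    have hgw₁ : reduceTensor ξ w₁ = g l₁ := by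
      rw [hw₁def, map_sub, hξone, sub_zero, hg]
    have hgw₂ : reduceTensor ξ w₂ = g l₂ := by
      rw [hw₂def, map_sub, hξone, sub_zero, hg]
    have E := hΦbr ((1:A) ⊗ₜ[K] l₁) ((1:A) ⊗ₜ[K] l₂)
    have hL : reduceTensor ξ (Φ (br₁ ((1:A) ⊗ₜ[K] l₁) ((1:A) ⊗ₜ[K] l₂)))
        = alphaCochain ξ br₁ l₁ l₂ + g (bll l₁ l₂) := by
      rw [hred, hcompat₁, hRone, hRone]
      rfl
    have hΦ1 : ∀ l : L, Φ ((1:A) ⊗ₜ[K] l)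
        = (1:A) ⊗ₜ[K] l + (Φ ((1:A) ⊗ₜ[K] l) - (1:A) ⊗ₜ[K] l) := by
      intro l; abel
    have hR : reduceTensor ξ (br₂ (Φ ((1:A) ⊗ₜ[K] l₁)) (Φ ((1:A) ⊗ₜ[K] l₂)))
        = alphaCochain ξ br₂ l₁ l₂ + bll (g l₁) l₂ + bll l₁ (g l₂) := by
      rw [hΦ1 l₁, hΦ1 l₂, ← hw₁def, ← hw₂def]
      rw [hbr₂_add_left, hbr₂_add_right, hbr₂_add_right, map_add, map_add, map_add]
      rw [h2a w₁ _ hw₁, h2a w₁ _ hw₁, h2b _ w₂ hw₂]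
      rw [hgw₁, hgw₂, hw₂, hRone, hRone]
      have hbz : bll (g l₁) (0 : L) = 0 := by
        have := h_smul_right 0 (g l₁) 0
        simpa using this
      rw [hbz]
      show reduceTensor ξ (br₂ ((1:A) ⊗ₜ[K] l₁) ((1:A) ⊗ₜ[K] l₂)) + bll l₁ (g l₂)
          + (bll (g l₁) l₂ + 0) = _
      rw [add_zero]
      show alphaCochain ξ br₂ l₁ l₂ + bll l₁ (g l₂) + bll (g l₁) l₂ = _
      abel
    have key : alphaCochain ξ br₁ l₁ l₂ + g (bll l₁ l₂)
        = alphaCochain ξ br₂ l₁ l₂ + bll (g l₁) l₂ + bll l₁ (g l₂) := by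
      rw [← hL, ← hR, E]
    have : alphaCochain ξ br₁ l₁ l₂
        = alphaCochain ξ br₂ l₁ l₂ + bll (g l₁) l₂ + bll l₁ (g l₂) - g (bll l₁ l₂) := by
      rw [← key]; abel
    rw [this]; abel
  · intro h
    choose g hgspec using fun i => h (ξf i) (hξ1 i)
    -- the equivalence and its inverse on the level of L
    let f : L →ₗ[K] A ⊗[K] L :=
      TensorProduct.mk K A L 1 + ∑ i, (TensorProduct.mk K A L (m i)).comp (g i)
    let f' : L →ₗ[K] A ⊗[K] L :=
      TensorProduct.mk K A L 1 - ∑ i, (TensorProduct.mk K A L (m i)).comp (g i)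
    have hf : ∀ l : L, f l = (1:A) ⊗ₜ[K] l + ∑ i, m i ⊗ₜ[K] g i l := by
      intro l
      simp [f, LinearMap.sum_apply, TensorProduct.mk_apply]
    have hf' : ∀ l : L, f' l = (1:A) ⊗ₜ[K] l - ∑ i, m i ⊗ₜ[K] g i l := by
      intro l
      simp [f', LinearMap.sum_apply, TensorProduct.mk_apply]
    have hRf : ∀ l : L, reduceTensor ε.toLinearMap (f l) = l := by
      intro l
      rw [hf, map_add, hRone, map_sum]
      have : ∀ i : Fin n, reduceTensor ε.toLinearMap (m i ⊗ₜ[K] g i l) = 0 := by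
        intro i
        rw [reduceTensor_eps_tmul, hmε i, zero_smul]
      rw [Finset.sum_congr rfl fun i _ => this i]
      simp
    have hRf' : ∀ l : L, reduceTensor ε.toLinearMap (f' l) = l := by
      intro l
      rw [hf', map_sub, hRone, map_sum]
      have : ∀ i : Fin n, reduceTensor ε.toLinearMap (m i ⊗ₜ[K] g i l) = 0 := by
        intro i
        rw [reduceTensor_eps_tmul, hmε i, zero_smul]
      rw [Finset.sum_congr rfl fun i _ => this i]
      simp
    let Φ₀ : A ⊗[K] L →ₗ[A] A ⊗[K] L := f.liftBaseChange A
    let Φ₀' : A ⊗[K] L →ₗ[A] A ⊗[K] L := f'.liftBaseChange A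
    have hΦ₀tmul : ∀ (a : A) (l : L), Φ₀ (a ⊗ₜ[K] l) = a • f l := fun a l => rfl
    have hΦ₀'tmul : ∀ (a : A) (l : L), Φ₀' (a ⊗ₜ[K] l) = a • f' l := fun a l => rfl
    -- m i • f v = m i ⊗ v
    have hmf : ∀ (i : Fin n) (v : L), m i • f v = m i ⊗ₜ[K] v := by
      intro i v
      rw [smul_of_eps_zero (L := L) ε hM2 (m i) (hmε i) (f v), hRf]
    have hmf' : ∀ (i : Fin n) (v : L), m i • f' v = m i ⊗ₜ[K] v := by
      intro i v
      rw [smul_of_eps_zero (L := L) ε hM2 (m i) (hmε i) (f' v), hRf']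
    have hΦ₀f' : ∀ l : L, Φ₀ (f' l) = (1:A) ⊗ₜ[K] l := by
      intro l
      rw [hf', map_sub, map_sum]
      have : ∀ i : Fin n, Φ₀ (m i ⊗ₜ[K] g i l) = m i ⊗ₜ[K] g i l := by
        intro i
        rw [hΦ₀tmul, hmf]
      rw [Finset.sum_congr rfl fun i _ => this i]
      have h1 : Φ₀ ((1:A) ⊗ₜ[K] l) = f l := by rw [hΦ₀tmul, one_smul]
      rw [h1, hf]
      abel
    have hΦ₀'f : ∀ l : L, Φ₀' (f l) = (1:A) ⊗ₜ[K] l := by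
      intro l
      rw [hf, map_add, map_sum]
      have : ∀ i : Fin n, Φ₀' (m i ⊗ₜ[K] g i l) = m i ⊗ₜ[K] g i l := by
        intro i
        rw [hΦ₀'tmul, hmf']
      rw [Finset.sum_congr rfl fun i _ => this i]
      have h1 : Φ₀' ((1:A) ⊗ₜ[K] l) = f' l := by rw [hΦ₀'tmul, one_smul]
      rw [h1, hf']
      abel
    have hinv1 : ∀ z : A ⊗[K] L, Φ₀ (Φ₀' z) = z := by
      intro z
      induction z using TensorProduct.induction_on with
      | zero => simp
      | tmul a l =>
          rw [hΦ₀'tmul, map_smul, hΦ₀f', smul_tmul', smul_eq_mul, mul_one]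
      | add x y hx hy => rw [map_add, map_add, hx, hy]
    have hinv2 : ∀ z : A ⊗[K] L, Φ₀' (Φ₀ z) = z := by
      intro z
      induction z using TensorProduct.induction_on with
      | zero => simp
      | tmul a l =>
          rw [hΦ₀tmul, map_smul, hΦ₀'f, smul_tmul', smul_eq_mul, mul_one]
      | add x y hx hy => rw [map_add, map_add, hx, hy]
    refine ⟨LinearEquiv.ofLinear Φ₀ Φ₀' (LinearMap.ext hinv1) (LinearMap.ext hinv2),
      ?_, ?_⟩
    · intro x
      show reduceTensor ε.toLinearMap (Φ₀ x) = reduceTensor ε.toLinearMap x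
      induction x using TensorProduct.induction_on with
      | zero => simp
      | tmul a l =>
          rw [hΦ₀tmul, reduceTensor_smul, hRf, reduceTensor_eps_tmul]
      | add x y hx hy => rw [map_add, map_add, map_add, hx, hy]
    · intro x y
      show Φ₀ (br₁ x y) = br₂ (Φ₀ x) (Φ₀ y)
      -- the key generator computation
      have hgen : ∀ l₁ l₂ : L,
          Φ₀ (br₁ ((1:A) ⊗ₜ[K] l₁) ((1:A) ⊗ₜ[K] l₂)) = br₂ (f l₁) (f l₂) := by
        intro l₁ l₂
        set bl := bll l₁ l₂ with hbl
        -- decompose B₁ := br₁ (1⊗l₁) (1⊗l₂)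
        have hB₁ : br₁ ((1:A) ⊗ₜ[K] l₁) ((1:A) ⊗ₜ[K] l₂)
            = (1:A) ⊗ₜ[K] bl + ∑ i, m i ⊗ₜ[K] alphaCochain (ξf i) br₁ l₁ l₂ := by
          conv_lhs => rw [hdecomp (br₁ ((1:A) ⊗ₜ[K] l₁) ((1:A) ⊗ₜ[K] l₂))]
          rw [hcompat₁, hRone, hRone]
          rfl
        have hB₂ : br₂ ((1:A) ⊗ₜ[K] l₁) ((1:A) ⊗ₜ[K] l₂)
            = (1:A) ⊗ₜ[K] bl + ∑ i, m i ⊗ₜ[K] alphaCochain (ξf i) br₂ l₁ l₂ := by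
          conv_lhs => rw [hdecomp (br₂ ((1:A) ⊗ₜ[K] l₁) ((1:A) ⊗ₜ[K] l₂))]
          rw [hcompat₂, hRone, hRone]
          rfl
        -- LHS
        have hLHS : Φ₀ (br₁ ((1:A) ⊗ₜ[K] l₁) ((1:A) ⊗ₜ[K] l₂))
            = (1:A) ⊗ₜ[K] bl + ∑ i, m i ⊗ₜ[K] g i bl
              + ∑ i, m i ⊗ₜ[K] alphaCochain (ξf i) br₁ l₁ l₂ := by
          rw [hB₁, map_add, map_sum]
          have h1 : Φ₀ ((1:A) ⊗ₜ[K] bl) = f bl := by rw [hΦ₀tmul, one_smul]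
          have h2 : ∀ i : Fin n, Φ₀ (m i ⊗ₜ[K] alphaCochain (ξf i) br₁ l₁ l₂)
              = m i ⊗ₜ[K] alphaCochain (ξf i) br₁ l₁ l₂ := by
            intro i; rw [hΦ₀tmul, hmf]
          rw [h1, Finset.sum_congr rfl fun i _ => h2 i, hf]
        -- RHS expansion
        have hbrL : ∀ (i : Fin n) (u : L) (y : A ⊗[K] L),
            br₂ (m i ⊗ₜ[K] u) y = m i ⊗ₜ[K] bll u (reduceTensor ε.toLinearMap y) := by
          intro i u y
          rw [_root_.tmul_eq_smul_one_tmul, hbr₂_smul_left,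
            smul_of_eps_zero (L := L) ε hM2 (m i) (hmε i), hcompat₂, hRone]
        have hbrR : ∀ (i : Fin n) (u : L) (y : A ⊗[K] L),
            br₂ y (m i ⊗ₜ[K] u) = m i ⊗ₜ[K] bll (reduceTensor ε.toLinearMap y) u := by
          intro i u y
          rw [_root_.tmul_eq_smul_one_tmul, hbr₂_smul_right,
            smul_of_eps_zero (L := L) ε hM2 (m i) (hmε i), hcompat₂, hRone]
        have hbrsum_left : ∀ (y : A ⊗[K] L) (v : Fin n → A ⊗[K] L),
            br₂ (∑ i, v i) y = ∑ i, br₂ (v i) y := by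
          intro y v
          induction (Finset.univ : Finset (Fin n)) using Finset.induction_on with
          | empty =>
              simp only [Finset.sum_empty]
              have := hbr₂_smul_left 0 0 y
              simpa using this
          | insert _ _ hx ih =>
              rw [Finset.sum_insert hx, Finset.sum_insert hx, hbr₂_add_left, ih]
        have hbrsum_right : ∀ (y : A ⊗[K] L) (v : Fin n → A ⊗[K] L),
            br₂ y (∑ i, v i) = ∑ i, br₂ y (v i) := by
          intro y v
          induction (Finset.univ : Finset (Fin n)) using Finset.induction_on with
          | empty =>
              simp only [Finset.sum_empty]
              have := hbr₂_smul_right 0 y 0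
              simpa using this
          | insert _ _ hx ih =>
              rw [Finset.sum_insert hx, Finset.sum_insert hx, hbr₂_add_right, ih]
        have hcross : ∀ i j : Fin n, ∀ u v : L,
            br₂ (m i ⊗ₜ[K] u) (m j ⊗ₜ[K] v) = 0 := by
          intro i j u v
          rw [hbrR, reduceTensor_eps_tmul, hmε i, zero_smul]
          have hz : bll (0 : L) v = 0 := by
            have := h_smul_left 0 0 v
            simpa using this
          rw [hz, tmul_zero]
        have hRHS : br₂ (f l₁) (f l₂)
            = (1:A) ⊗ₜ[K] bl + ∑ i, m i ⊗ₜ[K] alphaCochain (ξf i) br₂ l₁ l₂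
              + ∑ i, m i ⊗ₜ[K] bll l₁ (g i l₂)
              + ∑ i, m i ⊗ₜ[K] bll (g i l₁) l₂ := by
          rw [hf l₁, hf l₂, hbr₂_add_left]
          rw [hbr₂_add_right ((1:A) ⊗ₜ[K] l₁), hbr₂_add_right (∑ i, m i ⊗ₜ[K] g i l₁)]
          rw [hbrsum_right _ (fun i => m i ⊗ₜ[K] g i l₂)]
          rw [hbrsum_left _ (fun i => m i ⊗ₜ[K] g i l₁)]
          rw [hbrsum_left _ (fun i => m i ⊗ₜ[K] g i l₁)]
          have c1 : ∀ i : Fin n, br₂ ((1:A) ⊗ₜ[K] l₁) (m i ⊗ₜ[K] g i l₂)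
              = m i ⊗ₜ[K] bll l₁ (g i l₂) := by
            intro i; rw [hbrR, hRone]
          have c2 : ∀ i : Fin n, br₂ (m i ⊗ₜ[K] g i l₁) ((1:A) ⊗ₜ[K] l₂)
              = m i ⊗ₜ[K] bll (g i l₁) l₂ := by
            intro i; rw [hbrL, hRone]
          have c3 : ∀ i : Fin n,
              br₂ (m i ⊗ₜ[K] g i l₁) (∑ j, m j ⊗ₜ[K] g j l₂) = 0 := by
            intro i
            rw [hbrsum_right _ (fun j => m j ⊗ₜ[K] g j l₂)]
            rw [Finset.sum_congr rfl fun j _ => hcross i j (g i l₁) (g j l₂)]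
            simp
          rw [Finset.sum_congr rfl fun i _ => c1 i,
            Finset.sum_congr rfl fun i _ => c2 i,
            Finset.sum_congr rfl fun i _ => c3 i, hB₂]
          simp only [Finset.sum_const_zero, add_zero]
        rw [hLHS, hRHS]
        -- merge the sums and use the cohomologous hypothesis
        have hmerge1 : ∑ i, m i ⊗ₜ[K] g i bl + ∑ i, m i ⊗ₜ[K] alphaCochain (ξf i) br₁ l₁ l₂
            = ∑ i, m i ⊗ₜ[K] (g i bl + alphaCochain (ξf i) br₁ l₁ l₂) := by
          rw [← Finset.sum_add_distrib]
          exact Finset.sum_congr rfl fun i _ => (tmul_add _ _ _).symm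
        have hmerge2 : ∑ i, m i ⊗ₜ[K] alphaCochain (ξf i) br₂ l₁ l₂
              + ∑ i, m i ⊗ₜ[K] bll l₁ (g i l₂) + ∑ i, m i ⊗ₜ[K] bll (g i l₁) l₂
            = ∑ i, m i ⊗ₜ[K] (alphaCochain (ξf i) br₂ l₁ l₂ + bll l₁ (g i l₂)
                + bll (g i l₁) l₂) := by
          rw [← Finset.sum_add_distrib, ← Finset.sum_add_distrib]
          exact Finset.sum_congr rfl fun i _ => by rw [tmul_add, tmul_add]
        rw [add_assoc, hmerge1, add_assoc, add_assoc]
        rw [show (1:A) ⊗ₜ[K] bl + (∑ i, m i ⊗ₜ[K] alphaCochain (ξf i) br₂ l₁ l₂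
              + (∑ i, m i ⊗ₜ[K] bll l₁ (g i l₂) + ∑ i, m i ⊗ₜ[K] bll (g i l₁) l₂))
            = (1:A) ⊗ₜ[K] bl + (∑ i, m i ⊗ₜ[K] alphaCochain (ξf i) br₂ l₁ l₂
              + ∑ i, m i ⊗ₜ[K] bll l₁ (g i l₂) + ∑ i, m i ⊗ₜ[K] bll (g i l₁) l₂) from by abel]
        rw [hmerge2]
        congr 1
        refine Finset.sum_congr rfl fun i _ => ?_
        congr 1
        have hi := hgspec i l₁ l₂
        have : alphaCochain (ξf i) br₁ l₁ l₂ = alphaCochain (ξf i) br₂ l₁ l₂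
            + (bll l₁ (g i l₂) + bll (g i l₁) l₂ - g i bl) := by
          rw [← hbl] at hi
          rw [← hi]
          abel
        rw [this]
        abel
      -- extend to all of A ⊗ L by bilinearity
      have haux : ∀ (l₁ : L) (y : A ⊗[K] L),
          Φ₀ (br₁ ((1:A) ⊗ₜ[K] l₁) y) = br₂ (f l₁) (Φ₀ y) := by
        intro l₁ y
        induction y using TensorProduct.induction_on with
        | zero =>
            have hz1 : br₁ ((1:A) ⊗ₜ[K] l₁) 0 = 0 := by
              have := hbr₁_smul_right 0 ((1:A) ⊗ₜ[K] l₁) 0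
              simpa using this
            have hz2 : br₂ (f l₁) 0 = 0 := by
              have := hbr₂_smul_right 0 (f l₁) 0
              simpa using this
            rw [hz1, map_zero, hz2]
        | tmul a l₂ =>
            have h1 : Φ₀ ((1:A) ⊗ₜ[K] l₂) = f l₂ := by rw [hΦ₀tmul, one_smul]
            rw [_root_.tmul_eq_smul_one_tmul a l₂, hbr₁_smul_right, map_smul, map_smul,
              h1, hgen, hbr₂_smul_right]
        | add y₁ y₂ hy₁ hy₂ =>
            rw [hbr₁_add_right, map_add, hy₁, hy₂, map_add, hbr₂_add_right]
      induction x using TensorProduct.induction_on with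
      | zero =>
          have hz1 : br₁ 0 y = 0 := by
            have := hbr₁_smul_left 0 0 y
            simpa using this
          have hz2 : br₂ 0 (Φ₀ y) = 0 := by
            have := hbr₂_smul_left 0 0 (Φ₀ y)
            simpa using this
          rw [hz1, map_zero, hz2]
      | tmul a l₁ =>
          have h1 : Φ₀ ((1:A) ⊗ₜ[K] l₁) = f l₁ := by rw [hΦ₀tmul, one_smul]
          rw [_root_.tmul_eq_smul_one_tmul a l₁, hbr₁_smul_left, map_smul, map_smul,
            h1, haux, hbr₂_smul_left]
      | add x₁ x₂ hx₁ hx₂ =>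
          rw [hbr₁_add_left, map_add, hx₁, hx₂, map_add, hbr₂_add_left]
end

section
/- A deformation λ of a Leibniz algebra L with base A extends to the 1-dimensional extension B (corresponding to [f] ∈ H²_Harr(A;K)) if and only if the obstruction θ_λ([f]) ∈ HL³(L;L) vanishes. -/
open TensorProduct

/-- The Leibniz coboundary of a 2-cochain `ρ` (an auxiliary abbreviation). -/
def dObs {L : Type*} [AddCommGroup L] (bll ρ : L → L → L) (a b c : L) : L :=
  bll a (ρ b c) + bll (ρ a c) b - bll (ρ a b) c - ρ (bll a b) c + ρ (bll a c) b
    + ρ a (bll b c)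

/-- A deformation `λ` of a Leibniz algebra `L` with base `A` extends to a
1-dimensional extension `0 → K →ⁱ B →ᵖ A → 0` if and only if the obstruction
`θ_λ([f]) ∈ HL³(L;L)` vanishes, i.e. iff the obstruction cocycle `φ̄`
(computed from any `B`-bilinear lifting of `[,]_λ`) is a coboundary. -/
theorem deformation_extends_iff_obstruction_vanishes {K A B L : Type*} [Field K]
    [CommRing A] [Algebra K A] [FiniteDimensional K A] [IsLocalRing A]
    [CommRing B] [Algebra K B]
    [AddCommGroup L] [Module K L]
    (bll : L → L → L)
    (h_add_left : ∀ x y z : L, bll (x + y) z = bll x z + bll y z)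
    (h_add_right : ∀ x y z : L, bll x (y + z) = bll x y + bll x z)
    (h_smul_left : ∀ (c : K) (x y : L), bll (c • x) y = c • bll x y)
    (h_smul_right : ∀ (c : K) (x y : L), bll x (c • y) = c • bll x y)
    (h_leibniz : ∀ x y z : L, bll x (bll y z) = bll (bll x y) z - bll (bll x z) y)
    (ε : A →ₐ[K] K)
    -- the 1-dimensional extension 0 → K → B → A → 0
    (i : K →ₗ[K] B) (p : B →ₐ[K] A)
    (hi_inj : Function.Injective i) (hp_surj : Function.Surjective p)
    (hexact : LinearMap.range i = LinearMap.ker p.toLinearMap)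
    (hmod : ∀ (k : K) (b : B), i k * b = i (ε (p b) * k))
    -- the deformation λ with base A
    (brA : A ⊗[K] L → A ⊗[K] L → A ⊗[K] L)
    (hbrA_add_left : ∀ x y z, brA (x + y) z = brA x z + brA y z)
    (hbrA_add_right : ∀ x y z, brA x (y + z) = brA x y + brA x z)
    (hbrA_smul_left : ∀ (a : A) x y, brA (a • x) y = a • brA x y)
    (hbrA_smul_right : ∀ (a : A) x y, brA x (a • y) = a • brA x y)
    (hbrA_leibniz : ∀ x y z, brA x (brA y z) = brA (brA x y) z - brA (brA x z) y)
    (hcompatA : ∀ x y,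
      reduceTensor ε.toLinearMap (brA x y)
        = bll (reduceTensor ε.toLinearMap x) (reduceTensor ε.toLinearMap y))
    -- a B-bilinear lifting {,} of [,]_λ with its obstruction cocycle φ̄
    (br : B ⊗[K] L → B ⊗[K] L → B ⊗[K] L)
    (hbr_add_left : ∀ x y z, br (x + y) z = br x z + br y z)
    (hbr_add_right : ∀ x y z, br x (y + z) = br x y + br x z)
    (hbr_smul_left : ∀ (b : B) x y, br (b • x) y = b • br x y)
    (hbr_smul_right : ∀ (b : B) x y, br x (b • y) = b • br x y)
    (hlift : ∀ x y : B ⊗[K] L,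
      TensorProduct.map p.toLinearMap LinearMap.id (br x y)
        = brA (TensorProduct.map p.toLinearMap LinearMap.id x)
              (TensorProduct.map p.toLinearMap LinearMap.id y))
    (hII : ∀ (l : L) (x : B ⊗[K] L),
      br (i 1 ⊗ₜ[K] l) x = i 1 ⊗ₜ[K] bll l (reduceTensor (ε.comp p).toLinearMap x))
    (φb : L → L → L → L)
    (hφb : ∀ l₁ l₂ l₃ : L,
      i 1 ⊗ₜ[K] φb l₁ l₂ l₃
        = br ((1 : B) ⊗ₜ[K] l₁) (br ((1 : B) ⊗ₜ[K] l₂) ((1 : B) ⊗ₜ[K] l₃))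
          - br (br ((1 : B) ⊗ₜ[K] l₁) ((1 : B) ⊗ₜ[K] l₂)) ((1 : B) ⊗ₜ[K] l₃)
          + br (br ((1 : B) ⊗ₜ[K] l₁) ((1 : B) ⊗ₜ[K] l₃)) ((1 : B) ⊗ₜ[K] l₂)) :
    -- λ extends to a deformation μ with base B with p_*μ = λ …
    (∃ brB : B ⊗[K] L → B ⊗[K] L → B ⊗[K] L,
      (∀ x y z, brB (x + y) z = brB x z + brB y z)
      ∧ (∀ x y z, brB x (y + z) = brB x y + brB x z)
      ∧ (∀ (b : B) x y, brB (b • x) y = b • brB x y)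
      ∧ (∀ (b : B) x y, brB x (b • y) = b • brB x y)
      ∧ (∀ x y z, brB x (brB y z) = brB (brB x y) z - brB (brB x z) y)
      ∧ (∀ x y,
          reduceTensor (ε.comp p).toLinearMap (brB x y)
            = bll (reduceTensor (ε.comp p).toLinearMap x)
                  (reduceTensor (ε.comp p).toLinearMap y))
      ∧ (∀ l₁ l₂ : L,
          TensorProduct.map p.toLinearMap LinearMap.id
              (brB ((1 : B) ⊗ₜ[K] l₁) ((1 : B) ⊗ₜ[K] l₂))
            = brA ((1 : A) ⊗ₜ[K] l₁) ((1 : A) ⊗ₜ[K] l₂)))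
    ↔
    -- … iff φ̄ is a coboundary: φ̄ = δρ for some 2-cochain ρ
    (∃ ρ : L → L → L,
      (∀ x y z : L, ρ (x + y) z = ρ x z + ρ y z)
      ∧ (∀ x y z : L, ρ x (y + z) = ρ x y + ρ x z)
      ∧ (∀ (c : K) (x y : L), ρ (c • x) y = c • ρ x y)
      ∧ (∀ (c : K) (x y : L), ρ x (c • y) = c • ρ x y)
      ∧ (∀ l₁ l₂ l₃ : L,
          φb l₁ l₂ l₃
            = bll l₁ (ρ l₂ l₃) + bll (ρ l₁ l₃) l₂ - bll (ρ l₁ l₂) l₃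
              - ρ (bll l₁ l₂) l₃ + ρ (bll l₁ l₃) l₂ + ρ l₁ (bll l₂ l₃))) := by
  
  classical
  set e : B := i 1 with he
  set r : B ⊗[K] L →ₗ[K] L := reduceTensor (ε.comp p).toLinearMap with hrdef
  set rA : A ⊗[K] L →ₗ[K] L := reduceTensor ε.toLinearMap with hrAdef
  set π : B ⊗[K] L →ₗ[K] A ⊗[K] L := TensorProduct.map p.toLinearMap LinearMap.id with hπdef
  -- basic facts
  have hpe : p e = 0 := by
    have h1 : e ∈ LinearMap.range i := ⟨1, he.symm⟩
    rw [hexact] at h1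
    exact h1
  have hεpe : ε (p e) = 0 := by rw [hpe, map_zero]
  have r_tmul : ∀ (b : B) (l : L), r (b ⊗ₜ[K] l) = ε (p b) • l := by
    intro b l
    rw [hrdef]
    simp [reduceTensor]
  have r_one : ∀ l : L, r ((1 : B) ⊗ₜ[K] l) = l := by
    intro l; rw [r_tmul]; simp
  have r_e : ∀ l : L, r (e ⊗ₜ[K] l) = 0 := by
    intro l; rw [r_tmul, hεpe, zero_smul]
  have rA_tmul : ∀ (a : A) (l : L), rA (a ⊗ₜ[K] l) = ε a • l := by
    intro a l
    rw [hrAdef]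
    simp [reduceTensor]
  have π_tmul : ∀ (b : B) (l : L), π (b ⊗ₜ[K] l) = p b ⊗ₜ[K] l := by
    intro b l
    rw [hπdef]
    simp
  have π_one : ∀ l : L, π ((1 : B) ⊗ₜ[K] l) = (1 : A) ⊗ₜ[K] l := by
    intro l; rw [π_tmul, map_one]
  have π_e : ∀ l : L, π (e ⊗ₜ[K] l) = 0 := by
    intro l; rw [π_tmul, hpe, TensorProduct.zero_tmul]
  have r_eq : ∀ x : B ⊗[K] L, r x = rA (π x) := by
    intro x
    induction x using TensorProduct.induction_on with
    | zero => simp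
    | tmul b l => rw [π_tmul, r_tmul, rA_tmul]
    | add x y hx hy => rw [map_add, map_add, map_add, hx, hy]
  have ib_mul : ∀ b : B, e * b = ε (p b) • e := by
    intro b
    rw [he, hmod, mul_one, ← map_smul, smul_eq_mul, mul_one]
  have smul_e : ∀ (b : B) (m : L), b • (e ⊗ₜ[K] m) = e ⊗ₜ[K] (ε (p b) • m) := by
    intro b m
    rw [TensorProduct.smul_tmul', smul_eq_mul, mul_comm b e, ib_mul, TensorProduct.smul_tmul]
  have r_smul : ∀ (b : B) (x : B ⊗[K] L), r (b • x) = ε (p b) • r x := by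
    intro b x
    induction x using TensorProduct.induction_on with
    | zero => simp
    | tmul b' l =>
        rw [TensorProduct.smul_tmul', smul_eq_mul, r_tmul, r_tmul, map_mul, map_mul, mul_smul]
    | add x y hx hy => rw [smul_add, map_add, map_add, hx, hy, smul_add]
  have br0r : ∀ x, br x 0 = 0 := by
    intro x
    have h := hbr_smul_right 0 x 0
    rw [zero_smul, zero_smul] at h
    exact h
  have br0l : ∀ x, br 0 x = 0 := by
    intro x
    have h := hbr_smul_left 0 0 x
    rw [zero_smul, zero_smul] at h
    exact h
  have brK_l : ∀ (c : K) x y, br (c • x) y = c • br x y := by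
    intro c x y
    rw [← algebraMap_smul B c x, hbr_smul_left, algebraMap_smul]
  have brK_r : ∀ (c : K) x y, br x (c • y) = c • br x y := by
    intro c x y
    rw [← algebraMap_smul B c y, hbr_smul_right, algebraMap_smul]
  have br_sub_r : ∀ x a b : B ⊗[K] L, br x (a - b) = br x a - br x b := by
    intro x a b
    have hneg : br x (-b) = -br x b := by
      have h := hbr_smul_right (-1) x b
      have e1 : ((-1 : B) • b : B ⊗[K] L) = -b := neg_one_smul B b
      have e2 : ((-1 : B) • br x b : B ⊗[K] L) = -br x b := neg_one_smul B (br x b)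
      rw [e1, e2] at h
      exact h
    rw [sub_eq_add_neg, hbr_add_right, hneg, ← sub_eq_add_neg]
  have br_sub_l : ∀ a b x : B ⊗[K] L, br (a - b) x = br a x - br b x := by
    intro a b x
    have hneg : br (-b) x = -br b x := by
      have h := hbr_smul_left (-1) b x
      have e1 : ((-1 : B) • b : B ⊗[K] L) = -b := neg_one_smul B b
      have e2 : ((-1 : B) • br b x : B ⊗[K] L) = -br b x := neg_one_smul B (br b x)
      rw [e1, e2] at h
      exact h
    rw [sub_eq_add_neg, hbr_add_left, hneg, ← sub_eq_add_neg]
  have e_smul : ∀ x : B ⊗[K] L, e • x = e ⊗ₜ[K] (r x) := by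
    intro x
    induction x using TensorProduct.induction_on with
    | zero => simp
    | tmul b l =>
        rw [r_tmul, TensorProduct.smul_tmul', smul_eq_mul, ib_mul, TensorProduct.smul_tmul]
    | add x y hx hy => rw [smul_add, hx, hy, map_add, TensorProduct.tmul_add]
  have hcompat_br : ∀ x y, r (br x y) = bll (r x) (r y) := by
    intro x y
    rw [r_eq, hlift, hcompatA, ← r_eq, ← r_eq]
  have br_e_l : ∀ (m : L) (x : B ⊗[K] L), br (e ⊗ₜ[K] m) x = e ⊗ₜ[K] bll m (r x) :=
    fun m x => hII m x
  have br_e_r : ∀ (x : B ⊗[K] L) (m : L), br x (e ⊗ₜ[K] m) = e ⊗ₜ[K] bll (r x) m := by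
    intro x m
    have h1 : e ⊗ₜ[K] m = e • ((1 : B) ⊗ₜ[K] m) := by
      rw [TensorProduct.smul_tmul', smul_eq_mul, mul_one]
    rw [h1, hbr_smul_right, e_smul, hcompat_br, r_one]
  have ker_char : ∀ x : B ⊗[K] L, π x = 0 → ∃ m : L, x = e ⊗ₜ[K] m := by
    intro x hx
    have hex : Function.Exact i p.toLinearMap := by
      rw [LinearMap.exact_iff]; exact hexact.symm
    have hsurj : Function.Surjective p.toLinearMap := hp_surj
    have hex2 := rTensor_exact (R := K) L hex hsurj
    have hx' : LinearMap.rTensor L p.toLinearMap x = 0 := hx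
    obtain ⟨y, hy⟩ := (hex2 x).mp hx'
    refine ⟨TensorProduct.lid K L y, ?_⟩
    have hy2 : LinearMap.rTensor L i ((1 : K) ⊗ₜ[K] (TensorProduct.lid K L y))
        = e ⊗ₜ[K] (TensorProduct.lid K L y) := by
      rw [LinearMap.rTensor_tmul, ← he]
    rw [← hy2, ← hy]
    congr 1
    conv_lhs => rw [← (TensorProduct.lid K L).symm_apply_apply y]
    rw [TensorProduct.lid_symm_apply]
  have j_inj : ∀ m m' : L, e ⊗ₜ[K] m = e ⊗ₜ[K] m' → m = m' := by
    intro m m' h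
    obtain ⟨ξ, hξ⟩ := i.exists_leftInverse_of_injective (LinearMap.ker_eq_bot.mpr hi_inj)
    have hξe : ξ e = 1 := by
      rw [he]
      exact LinearMap.congr_fun hξ 1
    have h2 := congrArg (reduceTensor ξ) h
    simpa [reduceTensor, hξe] using h2
  constructor
  · rintro ⟨brB, H1, H2, H3, H4, H5, H6, H7⟩
    have brB0r : ∀ x, brB x 0 = 0 := by
      intro x
      have h := H4 0 x 0
      rw [zero_smul, zero_smul] at h
      exact h
    have brB0l : ∀ x, brB 0 x = 0 := by
      intro x
      have h := H3 0 0 x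
      rw [zero_smul, zero_smul] at h
      exact h
    have brBK_l : ∀ (c : K) x y, brB (c • x) y = c • brB x y := by
      intro c x y
      rw [← algebraMap_smul B c x, H3, algebraMap_smul]
    have brBK_r : ∀ (c : K) x y, brB x (c • y) = c • brB x y := by
      intro c x y
      rw [← algebraMap_smul B c y, H4, algebraMap_smul]
    have hker : ∀ l₁ l₂ : L, ∃ m : L,
        br ((1 : B) ⊗ₜ[K] l₁) ((1 : B) ⊗ₜ[K] l₂)
          - brB ((1 : B) ⊗ₜ[K] l₁) ((1 : B) ⊗ₜ[K] l₂) = e ⊗ₜ[K] m := by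
      intro l₁ l₂
      apply ker_char
      rw [map_sub, hlift, H7, π_one, π_one, sub_self]
    choose ρ hρ using hker
    have brEq : ∀ l₁ l₂ : L,
        br ((1 : B) ⊗ₜ[K] l₁) ((1 : B) ⊗ₜ[K] l₂)
          = brB ((1 : B) ⊗ₜ[K] l₁) ((1 : B) ⊗ₜ[K] l₂) + e ⊗ₜ[K] ρ l₁ l₂ := by
      intro l₁ l₂
      rw [← hρ l₁ l₂]
      abel
    have ρ_addl : ∀ x y z : L, ρ (x + y) z = ρ x z + ρ y z := by
      intro x y z
      apply j_inj
      rw [TensorProduct.tmul_add, ← hρ, ← hρ, ← hρ,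
        show (1 : B) ⊗ₜ[K] (x + y) = (1 : B) ⊗ₜ[K] x + (1 : B) ⊗ₜ[K] y from
          TensorProduct.tmul_add _ _ _, hbr_add_left, H1]
      abel
    have ρ_addr : ∀ x y z : L, ρ x (y + z) = ρ x y + ρ x z := by
      intro x y z
      apply j_inj
      rw [TensorProduct.tmul_add, ← hρ, ← hρ, ← hρ,
        show (1 : B) ⊗ₜ[K] (y + z) = (1 : B) ⊗ₜ[K] y + (1 : B) ⊗ₜ[K] z from
          TensorProduct.tmul_add _ _ _, hbr_add_right, H2]
      abel
    have ρ_smull : ∀ (c : K) (x y : L), ρ (c • x) y = c • ρ x y := by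
      intro c x y
      apply j_inj
      rw [TensorProduct.tmul_smul, ← hρ, ← hρ,
        show (1 : B) ⊗ₜ[K] (c • x) = c • ((1 : B) ⊗ₜ[K] x) from TensorProduct.tmul_smul _ _ _,
        brK_l, brBK_l, smul_sub]
    have ρ_smulr : ∀ (c : K) (x y : L), ρ x (c • y) = c • ρ x y := by
      intro c x y
      apply j_inj
      rw [TensorProduct.tmul_smul, ← hρ, ← hρ,
        show (1 : B) ⊗ₜ[K] (c • y) = c • ((1 : B) ⊗ₜ[K] y) from TensorProduct.tmul_smul _ _ _,
        brK_r, brBK_r, smul_sub]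
    have ρ0r : ∀ l : L, ρ l 0 = 0 := by
      intro l
      have h := ρ_smulr 0 l 0
      rw [zero_smul, zero_smul] at h
      exact h
    have ρ0l : ∀ l : L, ρ 0 l = 0 := by
      intro l
      have h := ρ_smull 0 0 l
      rw [zero_smul, zero_smul] at h
      exact h
    have Dfull_r : ∀ (l : L) (w : B ⊗[K] L),
        br ((1 : B) ⊗ₜ[K] l) w = brB ((1 : B) ⊗ₜ[K] l) w + e ⊗ₜ[K] ρ l (r w) := by
      intro l w
      induction w using TensorProduct.induction_on with
      | zero => rw [br0r, brB0r, map_zero, ρ0r, TensorProduct.tmul_zero, add_zero]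
      | tmul b l' =>
          have hb : b ⊗ₜ[K] l' = b • ((1 : B) ⊗ₜ[K] l') := by
            rw [TensorProduct.smul_tmul', smul_eq_mul, mul_one]
          rw [hb, hbr_smul_right, H4, r_smul, r_one, brEq l l', smul_add, smul_e, ρ_smulr]
      | add w w' hw hw' =>
          rw [hbr_add_right, H2, map_add, ρ_addr, TensorProduct.tmul_add, hw, hw']
          abel
    have Dfull_l : ∀ (w : B ⊗[K] L) (l : L),
        br w ((1 : B) ⊗ₜ[K] l) = brB w ((1 : B) ⊗ₜ[K] l) + e ⊗ₜ[K] ρ (r w) l := by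
      intro w l
      induction w using TensorProduct.induction_on with
      | zero => rw [br0l, brB0l, map_zero, ρ0l, TensorProduct.tmul_zero, add_zero]
      | tmul b l' =>
          have hb : b ⊗ₜ[K] l' = b • ((1 : B) ⊗ₜ[K] l') := by
            rw [TensorProduct.smul_tmul', smul_eq_mul, mul_one]
          rw [hb, hbr_smul_left, H3, r_smul, r_one, brEq l' l, smul_add, smul_e, ρ_smull]
      | add w w' hw hw' =>
          rw [hbr_add_left, H1, map_add, ρ_addl, TensorProduct.tmul_add, hw, hw']
          abel
    refine ⟨ρ, ρ_addl, ρ_addr, ρ_smull, ρ_smulr, ?_⟩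
    intro l₁ l₂ l₃
    apply j_inj
    have hT1 : br ((1 : B) ⊗ₜ[K] l₁) (br ((1 : B) ⊗ₜ[K] l₂) ((1 : B) ⊗ₜ[K] l₃))
        = brB ((1 : B) ⊗ₜ[K] l₁) (brB ((1 : B) ⊗ₜ[K] l₂) ((1 : B) ⊗ₜ[K] l₃))
          + e ⊗ₜ[K] (ρ l₁ (bll l₂ l₃) + bll l₁ (ρ l₂ l₃)) := by
      rw [brEq l₂ l₃, hbr_add_right, Dfull_r, br_e_r, H6]
      simp only [r_one]
      rw [TensorProduct.tmul_add]
      abel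
    have hT2 : br (br ((1 : B) ⊗ₜ[K] l₁) ((1 : B) ⊗ₜ[K] l₂)) ((1 : B) ⊗ₜ[K] l₃)
        = brB (brB ((1 : B) ⊗ₜ[K] l₁) ((1 : B) ⊗ₜ[K] l₂)) ((1 : B) ⊗ₜ[K] l₃)
          + e ⊗ₜ[K] (ρ (bll l₁ l₂) l₃ + bll (ρ l₁ l₂) l₃) := by
      rw [brEq l₁ l₂, hbr_add_left, Dfull_l, br_e_l, H6]
      simp only [r_one]
      rw [TensorProduct.tmul_add]
      abel
    have hT3 : br (br ((1 : B) ⊗ₜ[K] l₁) ((1 : B) ⊗ₜ[K] l₃)) ((1 : B) ⊗ₜ[K] l₂)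
        = brB (brB ((1 : B) ⊗ₜ[K] l₁) ((1 : B) ⊗ₜ[K] l₃)) ((1 : B) ⊗ₜ[K] l₂)
          + e ⊗ₜ[K] (ρ (bll l₁ l₃) l₂ + bll (ρ l₁ l₃) l₂) := by
      rw [brEq l₁ l₃, hbr_add_left, Dfull_l, br_e_l, H6]
      simp only [r_one]
      rw [TensorProduct.tmul_add]
      abel
    rw [hφb, hT1, hT2, hT3, H5]
    simp only [TensorProduct.tmul_add, TensorProduct.tmul_sub]
    abel
  · rintro ⟨ρ, hρ1, hρ2, hρ3, hρ4, hδ⟩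
    have bll0l : ∀ x : L, bll 0 x = 0 := by
      intro x
      have h := h_smul_left 0 0 x
      rw [zero_smul, zero_smul] at h
      exact h
    have bll0r : ∀ x : L, bll x 0 = 0 := by
      intro x
      have h := h_smul_right 0 x 0
      rw [zero_smul, zero_smul] at h
      exact h
    have ρ0l : ∀ x : L, ρ 0 x = 0 := by
      intro x
      have h := hρ3 0 0 x
      rw [zero_smul, zero_smul] at h
      exact h
    have ρ0r : ∀ x : L, ρ x 0 = 0 := by
      intro x
      have h := hρ4 0 x 0
      rw [zero_smul, zero_smul] at h
      exact h
    have hδ' : ∀ l₁ l₂ l₃ : L, φb l₁ l₂ l₃ = dObs bll ρ l₁ l₂ l₃ := by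
      intro l₁ l₂ l₃
      rw [hδ]
      rfl
    have Φz1 : ∀ b c : L, dObs bll ρ 0 b c = 0 := by
      intro b c
      simp [dObs, bll0l, bll0r, ρ0l, ρ0r]
    have Φz2 : ∀ a c : L, dObs bll ρ a 0 c = 0 := by
      intro a c
      simp [dObs, bll0l, bll0r, ρ0l, ρ0r]
    have Φz3 : ∀ a b : L, dObs bll ρ a b 0 = 0 := by
      intro a b
      simp [dObs, bll0l, bll0r, ρ0l, ρ0r]
    have Φa1 : ∀ a a' b c : L,
        dObs bll ρ (a + a') b c = dObs bll ρ a b c + dObs bll ρ a' b c := by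
      intro a a' b c
      simp only [dObs, h_add_left, h_add_right, hρ1, hρ2]
      abel
    have Φa2 : ∀ a b b' c : L,
        dObs bll ρ a (b + b') c = dObs bll ρ a b c + dObs bll ρ a b' c := by
      intro a b b' c
      simp only [dObs, h_add_left, h_add_right, hρ1, hρ2]
      abel
    have Φa3 : ∀ a b c c' : L,
        dObs bll ρ a b (c + c') = dObs bll ρ a b c + dObs bll ρ a b c' := by
      intro a b c c'
      simp only [dObs, h_add_left, h_add_right, hρ1, hρ2]
      abel
    have Φs1 : ∀ (k : K) (a b c : L), dObs bll ρ (k • a) b c = k • dObs bll ρ a b c := by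
      intro k a b c
      simp only [dObs, h_smul_left, h_smul_right, hρ3, hρ4, smul_add, smul_sub]
    have Φs2 : ∀ (k : K) (a b c : L), dObs bll ρ a (k • b) c = k • dObs bll ρ a b c := by
      intro k a b c
      simp only [dObs, h_smul_left, h_smul_right, hρ3, hρ4, smul_add, smul_sub]
    have Φs3 : ∀ (k : K) (a b c : L), dObs bll ρ a b (k • c) = k • dObs bll ρ a b c := by
      intro k a b c
      simp only [dObs, h_smul_left, h_smul_right, hρ3, hρ4, smul_add, smul_sub]
    have base : ∀ l₁ l₂ l₃ : L,
        br ((1 : B) ⊗ₜ[K] l₁) (br ((1 : B) ⊗ₜ[K] l₂) ((1 : B) ⊗ₜ[K] l₃))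
          - br (br ((1 : B) ⊗ₜ[K] l₁) ((1 : B) ⊗ₜ[K] l₂)) ((1 : B) ⊗ₜ[K] l₃)
          + br (br ((1 : B) ⊗ₜ[K] l₁) ((1 : B) ⊗ₜ[K] l₃)) ((1 : B) ⊗ₜ[K] l₂)
          = e ⊗ₜ[K] dObs bll ρ l₁ l₂ l₃ := by
      intro l₁ l₂ l₃
      rw [← hφb, hδ']
    have step3 : ∀ (l₁ l₂ : L) (z : B ⊗[K] L),
        br ((1 : B) ⊗ₜ[K] l₁) (br ((1 : B) ⊗ₜ[K] l₂) z)
          - br (br ((1 : B) ⊗ₜ[K] l₁) ((1 : B) ⊗ₜ[K] l₂)) z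
          + br (br ((1 : B) ⊗ₜ[K] l₁) z) ((1 : B) ⊗ₜ[K] l₂)
          = e ⊗ₜ[K] dObs bll ρ l₁ l₂ (r z) := by
      intro l₁ l₂ z
      induction z using TensorProduct.induction_on with
      | zero => simp [br0r, br0l, Φz3]
      | tmul b l₃ =>
          have hb : b ⊗ₜ[K] l₃ = b • ((1 : B) ⊗ₜ[K] l₃) := by
            rw [TensorProduct.smul_tmul', smul_eq_mul, mul_one]
          rw [hb]
          simp only [hbr_smul_right, hbr_smul_left, r_smul, r_one]
          rw [Φs3, ← smul_e, ← base]
          simp only [smul_add, smul_sub]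
      | add z z' hz hz' =>
          have key : br ((1 : B) ⊗ₜ[K] l₁) (br ((1 : B) ⊗ₜ[K] l₂) (z + z'))
              - br (br ((1 : B) ⊗ₜ[K] l₁) ((1 : B) ⊗ₜ[K] l₂)) (z + z')
              + br (br ((1 : B) ⊗ₜ[K] l₁) (z + z')) ((1 : B) ⊗ₜ[K] l₂)
              = (br ((1 : B) ⊗ₜ[K] l₁) (br ((1 : B) ⊗ₜ[K] l₂) z)
                  - br (br ((1 : B) ⊗ₜ[K] l₁) ((1 : B) ⊗ₜ[K] l₂)) z
                  + br (br ((1 : B) ⊗ₜ[K] l₁) z) ((1 : B) ⊗ₜ[K] l₂))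
                + (br ((1 : B) ⊗ₜ[K] l₁) (br ((1 : B) ⊗ₜ[K] l₂) z')
                  - br (br ((1 : B) ⊗ₜ[K] l₁) ((1 : B) ⊗ₜ[K] l₂)) z'
                  + br (br ((1 : B) ⊗ₜ[K] l₁) z') ((1 : B) ⊗ₜ[K] l₂)) := by
            rw [hbr_add_right ((1 : B) ⊗ₜ[K] l₂) z z',
              hbr_add_right ((1 : B) ⊗ₜ[K] l₁)
                (br ((1 : B) ⊗ₜ[K] l₂) z) (br ((1 : B) ⊗ₜ[K] l₂) z'),
              hbr_add_right (br ((1 : B) ⊗ₜ[K] l₁) ((1 : B) ⊗ₜ[K] l₂)) z z',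
              hbr_add_right ((1 : B) ⊗ₜ[K] l₁) z z',
              hbr_add_left (br ((1 : B) ⊗ₜ[K] l₁) z) (br ((1 : B) ⊗ₜ[K] l₁) z')
                ((1 : B) ⊗ₜ[K] l₂)]
            abel
          rw [key, hz, hz', map_add, Φa3, TensorProduct.tmul_add]
    have step2 : ∀ (l₁ : L) (y z : B ⊗[K] L),
        br ((1 : B) ⊗ₜ[K] l₁) (br y z)
          - br (br ((1 : B) ⊗ₜ[K] l₁) y) z
          + br (br ((1 : B) ⊗ₜ[K] l₁) z) y
          = e ⊗ₜ[K] dObs bll ρ l₁ (r y) (r z) := by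
      intro l₁ y z
      induction y using TensorProduct.induction_on with
      | zero => simp [br0r, br0l, Φz2]
      | tmul b l₂ =>
          have hb : b ⊗ₜ[K] l₂ = b • ((1 : B) ⊗ₜ[K] l₂) := by
            rw [TensorProduct.smul_tmul', smul_eq_mul, mul_one]
          rw [hb]
          simp only [hbr_smul_right, hbr_smul_left, r_smul, r_one]
          rw [Φs2, ← smul_e, ← step3]
          simp only [smul_add, smul_sub]
      | add y y' hy hy' =>
          have key : br ((1 : B) ⊗ₜ[K] l₁) (br (y + y') z)
              - br (br ((1 : B) ⊗ₜ[K] l₁) (y + y')) z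
              + br (br ((1 : B) ⊗ₜ[K] l₁) z) (y + y')
              = (br ((1 : B) ⊗ₜ[K] l₁) (br y z)
                  - br (br ((1 : B) ⊗ₜ[K] l₁) y) z
                  + br (br ((1 : B) ⊗ₜ[K] l₁) z) y)
                + (br ((1 : B) ⊗ₜ[K] l₁) (br y' z)
                  - br (br ((1 : B) ⊗ₜ[K] l₁) y') z
                  + br (br ((1 : B) ⊗ₜ[K] l₁) z) y') := by
            rw [hbr_add_left y y' z,
              hbr_add_right ((1 : B) ⊗ₜ[K] l₁) (br y z) (br y' z),
              hbr_add_right ((1 : B) ⊗ₜ[K] l₁) y y',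
              hbr_add_left (br ((1 : B) ⊗ₜ[K] l₁) y) (br ((1 : B) ⊗ₜ[K] l₁) y') z,
              hbr_add_right (br ((1 : B) ⊗ₜ[K] l₁) z) y y']
            abel
          rw [key, hy, hy', map_add, Φa2, TensorProduct.tmul_add]
    have Jgen : ∀ x y z : B ⊗[K] L,
        br x (br y z) - br (br x y) z + br (br x z) y
          = e ⊗ₜ[K] dObs bll ρ (r x) (r y) (r z) := by
      intro x y z
      induction x using TensorProduct.induction_on with
      | zero => simp [br0r, br0l, Φz1]
      | tmul b l₁ =>
          have hb : b ⊗ₜ[K] l₁ = b • ((1 : B) ⊗ₜ[K] l₁) := by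
            rw [TensorProduct.smul_tmul', smul_eq_mul, mul_one]
          rw [hb]
          simp only [hbr_smul_right, hbr_smul_left, r_smul, r_one]
          rw [Φs1, ← smul_e, ← step2]
          simp only [smul_add, smul_sub]
      | add x x' hx hx' =>
          have key : br (x + x') (br y z) - br (br (x + x') y) z + br (br (x + x') z) y
              = (br x (br y z) - br (br x y) z + br (br x z) y)
                + (br x' (br y z) - br (br x' y) z + br (br x' z) y) := by
            rw [hbr_add_left x x' (br y z), hbr_add_left x x' y, hbr_add_left x x' z,
              hbr_add_left (br x y) (br x' y) z, hbr_add_left (br x z) (br x' z) y]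
            abel
          rw [key, hx, hx', map_add, Φa1, TensorProduct.tmul_add]
    refine ⟨fun x y => br x y - e ⊗ₜ[K] ρ (r x) (r y), ?_, ?_, ?_, ?_, ?_, ?_, ?_⟩
    · intro x y z
      dsimp only
      rw [hbr_add_left, map_add, hρ1, TensorProduct.tmul_add]
      abel
    · intro x y z
      dsimp only
      rw [hbr_add_right, map_add, hρ2, TensorProduct.tmul_add]
      abel
    · intro b x y
      dsimp only
      rw [hbr_smul_left, r_smul, hρ3, smul_sub, smul_e]
    · intro b x y
      dsimp only
      rw [hbr_smul_right, r_smul, hρ4, smul_sub, smul_e]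
    · intro x y z
      dsimp only
      have hry : r (br y z - e ⊗ₜ[K] ρ (r y) (r z)) = bll (r y) (r z) := by
        rw [map_sub, hcompat_br, r_e, sub_zero]
      have hrxy : r (br x y - e ⊗ₜ[K] ρ (r x) (r y)) = bll (r x) (r y) := by
        rw [map_sub, hcompat_br, r_e, sub_zero]
      have hrxz : r (br x z - e ⊗ₜ[K] ρ (r x) (r z)) = bll (r x) (r z) := by
        rw [map_sub, hcompat_br, r_e, sub_zero]
      rw [hry, hrxy, hrxz, br_sub_r, br_sub_l, br_sub_l, br_e_r, br_e_l, br_e_l]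
      have hJ : br x (br y z)
          = br (br x y) z - br (br x z) y + e ⊗ₜ[K] dObs bll ρ (r x) (r y) (r z) := by
        rw [← Jgen x y z]
        abel
      rw [hJ]
      simp only [dObs, TensorProduct.tmul_add, TensorProduct.tmul_sub]
      abel
    · intro x y
      dsimp only
      rw [map_sub, hcompat_br, r_e, sub_zero]
    · intro l₁ l₂
      dsimp only
      rw [map_sub, hlift, π_one, π_one, π_e, sub_zero]
end
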